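/- arXiv:2308.03408 — 4 statements merged into one kernel-verified Lean document; each statement's English description precedes it below -/
import Mathlib

section
/- Nehari minimizers are weak solutions (Lemma 2.2, case (A)): Let 1 ≤ N ≤ 5, γ₁, γ₂, γ₃ > 0, c ∈ ℝ^N, and ω > max{γ₁|c|²/4, γ₂|c|²/4, γ₃|c|²/8}. If (u,v,w) ∈ H¹(ℝ^N)³ satisfies (u,v,w) ≠ (0,0,0), Ñ_{ω,c}(u,v,w) = 0 and S̃_{ω,c}(u,v,w) = μ̃_{ω,c}, then (u,v,w) is a distributional solution of the stationary system: −Δu + (γ₁ω−γ₁²|c|²/4)u = e^{−iβ c·x} w conj(v), −Δv + (γ₂ω−γ₂²|c|²/4)v = e^{−iβ c·x} w conj(u), −Δw + (2γ₃ω−γ₃²|c|²/4)w = e^{iβ c·x} u v; that is, for every smooth compactly supported θ : ℝ^N → ℂ one has ∫ Σᵢ(∇u)ᵢ conj((∇θ)ᵢ) dx + (γ₁ω−γ₁²|c|²/4)∫ u conj(θ) dx = ∫ e^{−iβ c·x} w conj(v) conj(θ) dx, and analogously for the other two equations. -/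
noncomputable section

open MeasureTheory Filter Complex ComplexConjugate

/-- Euclidean space `ℝ^N`. -/
abbrev Rn (N : ℕ) : Type := EuclideanSpace ℝ (Fin N)

/-- `ℂ^N`, the target of gradients of complex-valued functions on `ℝ^N`. -/
abbrev Cn (N : ℕ) : Type := EuclideanSpace ℂ (Fin N)

/-- `du` is the weak (distributional) gradient of `u` :
`∫ u ∂ᵢθ = - ∫ (du)ᵢ θ` for every smooth compactly supported test function `θ`. -/
def IsWeakGrad {N : ℕ} (u : Rn N → ℂ) (du : Rn N → Cn N) : Prop :=
  ∀ θ : Rn N → ℂ, ContDiff ℝ (⊤ : ℕ∞) θ → HasCompactSupport θ → ∀ i : Fin N,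
    (∫ x, u x * fderiv ℝ θ x (EuclideanSpace.single i (1 : ℝ)))
      = - ∫ x, du x i * θ x

/-- A complex-valued function on `ℝ^N` bundled with a (candidate) gradient. -/
structure WFun (N : ℕ) where
  toFun : Rn N → ℂ
  grad : Rn N → Cn N

namespace WFun

/-- Membership in `H¹(ℝ^N)` : `u ∈ L²`, and the bundled gradient is a genuine weak
gradient belonging to `L²`. -/
def InH1 {N : ℕ} (u : WFun N) : Prop :=
  IsWeakGrad u.toFun u.grad ∧ MemLp u.toFun 2 (volume : Measure (Rn N)) ∧
    MemLp u.grad 2 (volume : Measure (Rn N))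

/-- Membership in the homogeneous Sobolev space `Ḣ¹(ℝ^N)` (`N ≥ 3`) :
`u ∈ L^{2N/(N-2)}`, and the bundled gradient is a genuine weak gradient in `L²`. -/
def InH1dot {N : ℕ} (u : WFun N) : Prop :=
  IsWeakGrad u.toFun u.grad ∧
    MemLp u.toFun (ENNReal.ofReal (2 * (N : ℝ) / ((N : ℝ) - 2))) (volume : Measure (Rn N)) ∧
    MemLp u.grad 2 (volume : Measure (Rn N))

/-- A function is (essentially) zero. -/
def IsZero {N : ℕ} (u : WFun N) : Prop :=
  u.toFun =ᵐ[(volume : Measure (Rn N))] 0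

end WFun

/-- The triple `(u,v,w)` is trivial, i.e. equals `(0,0,0)` a.e. -/
def Triv {N : ℕ} (u v w : WFun N) : Prop := u.IsZero ∧ v.IsZero ∧ w.IsZero

/-- `‖∇u‖_{L²}²`. -/
def kin {N : ℕ} (u : WFun N) : ℝ := ∫ x, ‖u.grad x‖ ^ 2

/-- `‖u‖_{L²}²`. -/
def msq {N : ℕ} (u : WFun N) : ℝ := ∫ x, ‖u.toFun x‖ ^ 2

/-- `K(u,v,w) = ∫ |∇u|² + |∇v|² + |∇w|²`. -/
def Kfun {N : ℕ} (u v w : WFun N) : ℝ := kin u + kin v + kin w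

/-- The oscillating phase `e^{i b c·x}`. -/
def phase {N : ℕ} (b : ℝ) (c x : Rn N) : ℂ :=
  Complex.exp (Complex.I * Complex.ofReal (b * (inner ℝ c x : ℝ)))

/-- `Ṽ(u,v,w) = Re ∫ e^{i b c·x} u v conj w` on raw functions. -/
def Vraw {N : ℕ} (b : ℝ) (c : Rn N) (u v w : Rn N → ℂ) : ℝ :=
  (∫ x, phase b c x * u x * v x * conj (w x)).re

/-- `β = (γ₁+γ₂-γ₃)/2`. -/
def betaC (g1 g2 g3 : ℝ) : ℝ := (g1 + g2 - g3) / 2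

/-- The quadratic part `Q̃_{ω,c}` of the action functional. -/
def Qt {N : ℕ} (g1 g2 g3 om : ℝ) (c : Rn N) (u v w : WFun N) : ℝ :=
  (1 / 2) * Kfun u v w
    + (1 / 2) * (g1 * om - g1 ^ 2 * ‖c‖ ^ 2 / 4) * msq u
    + (1 / 2) * (g2 * om - g2 ^ 2 * ‖c‖ ^ 2 / 4) * msq v
    + (1 / 2) * (2 * g3 * om - g3 ^ 2 * ‖c‖ ^ 2 / 4) * msq w

/-- `Ṽ(u,v,w) = Re ∫ e^{iβ c·x} u v conj w`. -/
def Vt {N : ℕ} (g1 g2 g3 : ℝ) (c : Rn N) (u v w : WFun N) : ℝ :=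
  Vraw (betaC g1 g2 g3) c u.toFun v.toFun w.toFun

/-- The action `S̃_{ω,c} = Q̃_{ω,c} - Ṽ`. -/
def St {N : ℕ} (g1 g2 g3 om : ℝ) (c : Rn N) (u v w : WFun N) : ℝ :=
  Qt g1 g2 g3 om c u v w - Vt g1 g2 g3 c u v w

/-- The Nehari functional `Ñ_{ω,c} = 2Q̃_{ω,c} - 3Ṽ`. -/
def Nt {N : ℕ} (g1 g2 g3 om : ℝ) (c : Rn N) (u v w : WFun N) : ℝ :=
  2 * Qt g1 g2 g3 om c u v w - 3 * Vt g1 g2 g3 c u v w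

/-- The Nehari level `μ̃_{ω,c}` relative to function spaces `X, Y, Z` for the three
components: the infimum of `S̃_{ω,c}` over nonzero triples on the Nehari manifold. -/
def mutX {N : ℕ} (g1 g2 g3 om : ℝ) (c : Rn N) (X Y Z : WFun N → Prop) : ℝ :=
  sInf {s : ℝ | ∃ u v w : WFun N, X u ∧ Y v ∧ Z w ∧ ¬ Triv u v w ∧
    Nt g1 g2 g3 om c u v w = 0 ∧ s = St g1 g2 g3 om c u v w}

/-- The Nehari level `μ̃_{ω,c}` over `H¹ × H¹ × H¹`. -/
def muTilde {N : ℕ} (g1 g2 g3 om : ℝ) (c : Rn N) : ℝ :=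
  mutX g1 g2 g3 om c WFun.InH1 WFun.InH1 WFun.InH1

/-- `i`-th component of the momentum `P(u,v,w)`. -/
def momComp {N : ℕ} (g1 g2 g3 : ℝ) (u v w : WFun N) (i : Fin N) : ℝ :=
  g1 * (∫ x, Complex.I * u.grad x i * conj (u.toFun x)).re
    + g2 * (∫ x, Complex.I * v.grad x i * conj (v.toFun x)).re
    + g3 * (∫ x, Complex.I * w.grad x i * conj (w.toFun x)).re

/-- The scalar product `c · P(u,v,w)` of `c` with the momentum. -/
def cdotP {N : ℕ} (g1 g2 g3 : ℝ) (c : Rn N) (u v w : WFun N) : ℝ :=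
  ∑ i, c i * momComp g1 g2 g3 u v w i

/-- `V(u,v,w) = Re ∫ u v conj w`. -/
def V0 {N : ℕ} (u v w : WFun N) : ℝ :=
  (∫ x, u.toFun x * v.toFun x * conj (w.toFun x)).re

/-- The (untilded) quadratic functional
`Q_{ω,c} = ½K + (ωγ₁/2)‖u‖² + (ωγ₂/2)‖v‖² + γ₃ω‖w‖² + ½ c·P`. -/
def Qf {N : ℕ} (g1 g2 g3 om : ℝ) (c : Rn N) (u v w : WFun N) : ℝ :=
  (1 / 2) * Kfun u v w + om * g1 / 2 * msq u + om * g2 / 2 * msq v + g3 * om * msq w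
    + (1 / 2) * cdotP g1 g2 g3 c u v w

/-- The action `S_{ω,c} = Q_{ω,c} - V`. -/
def Sf {N : ℕ} (g1 g2 g3 om : ℝ) (c : Rn N) (u v w : WFun N) : ℝ :=
  Qf g1 g2 g3 om c u v w - V0 u v w

/-- The Nehari functional `N_{ω,c} = 2Q_{ω,c} - 3V`. -/
def Nf {N : ℕ} (g1 g2 g3 om : ℝ) (c : Rn N) (u v w : WFun N) : ℝ :=
  2 * Qf g1 g2 g3 om c u v w - 3 * V0 u v w

/-- The Nehari level `μ_{ω,c}` for the untilded functionals. -/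
def muf {N : ℕ} (g1 g2 g3 om : ℝ) (c : Rn N) : ℝ :=
  sInf {s : ℝ | ∃ u v w : WFun N, u.InH1 ∧ v.InH1 ∧ w.InH1 ∧ ¬ Triv u v w ∧
    Nf g1 g2 g3 om c u v w = 0 ∧ s = Sf g1 g2 g3 om c u v w}

/-- `u` is a distributional solution of `-Δu + a u = f`: for every smooth compactly
supported `θ`, `∫ ∇u · conj ∇θ + a ∫ u conj θ = ∫ f conj θ`. -/
def IsWeakSol {N : ℕ} (a : ℝ) (u : WFun N) (f : Rn N → ℂ) : Prop :=
  ∀ θ : Rn N → ℂ, ContDiff ℝ (⊤ : ℕ∞) θ → HasCompactSupport θ →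
    (∫ x, ∑ i, u.grad x i * conj (fderiv ℝ θ x (EuclideanSpace.single i (1 : ℝ))))
      + (a : ℂ) * (∫ x, u.toFun x * conj (θ x))
      = ∫ x, f x * conj (θ x)

/-- `(u,v,w)` is a distributional solution of the stationary system
`-Δu + (γ₁ω-γ₁²|c|²/4)u = e^{-iβc·x} w conj v`,
`-Δv + (γ₂ω-γ₂²|c|²/4)v = e^{-iβc·x} w conj u`,
`-Δw + (2γ₃ω-γ₃²|c|²/4)w = e^{iβc·x} u v`. -/
def SolvesSystem {N : ℕ} (g1 g2 g3 om : ℝ) (c : Rn N) (u v w : WFun N) : Prop :=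
  IsWeakSol (g1 * om - g1 ^ 2 * ‖c‖ ^ 2 / 4) u
      (fun x => phase (-(betaC g1 g2 g3)) c x * w.toFun x * conj (v.toFun x)) ∧
    IsWeakSol (g2 * om - g2 ^ 2 * ‖c‖ ^ 2 / 4) v
      (fun x => phase (-(betaC g1 g2 g3)) c x * w.toFun x * conj (u.toFun x)) ∧
    IsWeakSol (2 * g3 * om - g3 ^ 2 * ‖c‖ ^ 2 / 4) w
      (fun x => phase (betaC g1 g2 g3) c x * u.toFun x * v.toFun x)

/-- `(u,v,w)` is a distributional solution of the standing-wave system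
`-Δu + γ₁ω u = w v`, `-Δv + γ₂ω v = w u`, `-Δw + 2γ₃ω w = u v`. -/
def SolvesStanding {N : ℕ} (g1 g2 g3 om : ℝ) (u v w : WFun N) : Prop :=
  IsWeakSol (g1 * om) u (fun x => w.toFun x * v.toFun x) ∧
    IsWeakSol (g2 * om) v (fun x => w.toFun x * u.toFun x) ∧
    IsWeakSol (2 * g3 * om) w (fun x => u.toFun x * v.toFun x)

/-- Weak convergence in `H¹(ℝ^N)` of a sequence of functions-with-gradients. -/
def WeakH1 {N : ℕ} (un : ℕ → WFun N) (u : WFun N) : Prop :=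
  ∀ g : WFun N, g.InH1 →
    Tendsto (fun n => (∫ x, (un n).toFun x * conj (g.toFun x)) +
        ∫ x, ∑ i, (un n).grad x i * conj (g.grad x i)) atTop
      (nhds ((∫ x, u.toFun x * conj (g.toFun x)) +
        ∫ x, ∑ i, u.grad x i * conj (g.grad x i)))

/-- Squared `H¹`-distance between two functions given with their gradients. -/
def h1distSq {N : ℕ} (f g : Rn N → ℂ) (df dg : Rn N → Cn N) : ℝ :=
  (∫ x, ‖f x - g x‖ ^ 2) + ∫ x, ‖df x - dg x‖ ^ 2

/-- `f` is a positive (real-valued) function. -/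
def IsPosFun {N : ℕ} (f : Rn N → ℂ) : Prop := ∀ x, 0 < (f x).re ∧ (f x).im = 0

/-- `f` is radially symmetric. -/
def IsRadial {N : ℕ} (f : Rn N → ℂ) : Prop := ∀ x y : Rn N, ‖x‖ = ‖y‖ → f x = f y

/-- `M(u,v,w) = γ₁‖u‖² + γ₂‖v‖² + 2γ₃‖w‖²`. -/
def Mmass {N : ℕ} (g1 g2 g3 : ℝ) (u v w : WFun N) : ℝ :=
  g1 * msq u + g2 * msq v + 2 * g3 * msq w

/-- The Galilean modulation `e^{i(g/2) c·x} u`, with the correspondingly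
modulated gradient. -/
def modW {N : ℕ} (g : ℝ) (c : Rn N) (u : WFun N) : WFun N where
  toFun := fun x => Complex.exp (Complex.I * Complex.ofReal (g / 2 * (inner ℝ c x : ℝ))) * u.toFun x
  grad := fun x => (WithLp.equiv 2 (Fin N → ℂ)).symm fun i =>
    Complex.exp (Complex.I * Complex.ofReal (g / 2 * (inner ℝ c x : ℝ))) *
      (u.grad x i + Complex.I * Complex.ofReal (g / 2 * c i) * u.toFun x)

/-- The Laplacian of a (smooth) complex-valued function. -/
def lapC {N : ℕ} (f : Rn N → ℂ) (x : Rn N) : ℂ :=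
  ∑ i : Fin N, fderiv ℝ (fun y => fderiv ℝ f y (EuclideanSpace.single i (1 : ℝ))) x
    (EuclideanSpace.single i (1 : ℝ))

/-- The Laplacian of a (smooth) real-valued function. -/
def lapR {N : ℕ} (f : Rn N → ℝ) (x : Rn N) : ℝ :=
  ∑ i : Fin N, fderiv ℝ (fun y => fderiv ℝ f y (EuclideanSpace.single i (1 : ℝ))) x
    (EuclideanSpace.single i (1 : ℝ))

/-- `|∇f(x)|²` for a real-valued function. -/
def gradSq {N : ℕ} (f : Rn N → ℝ) (x : Rn N) : ℝ :=
  ∑ i : Fin N, (fderiv ℝ f x (EuclideanSpace.single i (1 : ℝ))) ^ 2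


/-! ### Auxiliary infrastructure -/

open scoped ENNReal

namespace NehariAux

variable {N : ℕ}

lemma memLp_conj {f : Rn N → ℂ} {p : ℝ≥0∞} (hf : MemLp f p (volume : Measure (Rn N))) :
    MemLp (fun x => conj (f x)) p (volume : Measure (Rn N)) := by
  exact
    ((Complex.conjCLE.toContinuousLinearMap : ℂ →L[ℝ] ℂ).comp_memLp' hf)

lemma integrable_mul2 {f g : Rn N → ℂ} (hf : MemLp f 2 (volume : Measure (Rn N)))
    (hg : MemLp g 2 (volume : Measure (Rn N))) :
    Integrable (fun x => f x * g x) (volume : Measure (Rn N)) := by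
  have h := hg.smul (φ := f) hf (r := 1)
    (hpqr := ⟨by rw [inv_one, ENNReal.inv_two_add_inv_two]⟩)
  rw [← memLp_one_iff_integrable]
  exact h

lemma integrable_mul_conj {f g : Rn N → ℂ} (hf : MemLp f 2 (volume : Measure (Rn N)))
    (hg : MemLp g 2 (volume : Measure (Rn N))) :
    Integrable (fun x => f x * conj (g x)) (volume : Measure (Rn N)) :=
  integrable_mul2 hf (memLp_conj hg)

lemma memLp_comp2 {f : Rn N → Cn N} {p : ℝ≥0∞}
    (hf : MemLp f p (volume : Measure (Rn N))) (i : Fin N) :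
    MemLp (fun x => f x i) p (volume : Measure (Rn N)) := by
  exact ((EuclideanSpace.proj i : Cn N →L[ℂ] ℂ).comp_memLp' hf)

lemma norm_phase (b : ℝ) (c x : Rn N) : ‖phase b c x‖ = 1 := by
  simp [phase, Complex.norm_exp]

lemma continuous_phase (b : ℝ) (c : Rn N) : Continuous (phase b c (N := N)) := by
  have h1 : Continuous fun x : Rn N => (inner ℝ c x : ℝ) :=
    Continuous.inner continuous_const continuous_id
  exact Complex.continuous_exp.comp
    (continuous_const.mul (Complex.continuous_ofReal.comp (continuous_const.mul h1)))

lemma aesm_phase (b : ℝ) (c : Rn N) :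
    AEStronglyMeasurable (phase b c (N := N)) (volume : Measure (Rn N)) :=
  (continuous_phase b c).aestronglyMeasurable

/-- pointwise expansion of `‖z + t w‖²`. -/
lemma normsq_add_mul (z w : ℂ) (t : ℝ) :
    ‖z + (t : ℂ) * w‖ ^ 2 = ‖z‖ ^ 2 + t * (2 * (z * conj w).re) + t ^ 2 * ‖w‖ ^ 2 := by
  have h : ∀ u : ℂ, ‖u‖ ^ 2 = u.re ^ 2 + u.im ^ 2 := by
    intro u
    rw [Complex.sq_norm, Complex.normSq_apply]; ring
  rw [h, h, h]
  simp [Complex.add_re, Complex.add_im, Complex.mul_re, Complex.mul_im]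
  ring


/-- Integral expansion of `∫ ‖f + t g‖²` for `f, g ∈ L²`. -/
lemma l2_expand {f g : Rn N → ℂ} (hf : MemLp f 2 (volume : Measure (Rn N)))
    (hg : MemLp g 2 (volume : Measure (Rn N))) (t : ℝ) :
    (∫ x, ‖f x + (t : ℂ) * g x‖ ^ 2) =
      (∫ x, ‖f x‖ ^ 2) + t * (2 * (∫ x, f x * conj (g x)).re)
        + t ^ 2 * (∫ x, ‖g x‖ ^ 2) := by
  have hf2 : Integrable (fun x => ‖f x‖ ^ 2) (volume : Measure (Rn N)) :=
    (memLp_two_iff_integrable_sq_norm hf.1).1 hf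
  have hg2 : Integrable (fun x => ‖g x‖ ^ 2) (volume : Measure (Rn N)) :=
    (memLp_two_iff_integrable_sq_norm hg.1).1 hg
  have hfg : Integrable (fun x => f x * conj (g x)) (volume : Measure (Rn N)) :=
    integrable_mul_conj hf hg
  have hre : Integrable (fun x => (f x * conj (g x)).re) (volume : Measure (Rn N)) := by
    simpa [RCLike.re_to_complex] using hfg.re
  have key : (∫ x, ‖f x + (t : ℂ) * g x‖ ^ 2) =
      ∫ x, (‖f x‖ ^ 2 + t * (2 * (f x * conj (g x)).re) + t ^ 2 * ‖g x‖ ^ 2) := by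
    congr 1; funext x; exact normsq_add_mul _ _ _
  rw [key]
  have e1 : Integrable (fun x => t * (2 * (f x * conj (g x)).re)) (volume : Measure (Rn N)) :=
    (hre.const_mul 2).const_mul t
  have e2 : Integrable (fun x => ‖f x‖ ^ 2 + t * (2 * (f x * conj (g x)).re))
      (volume : Measure (Rn N)) := hf2.add e1
  have e3 : Integrable (fun x => t ^ 2 * ‖g x‖ ^ 2) (volume : Measure (Rn N)) :=
    hg2.const_mul (t ^ 2)
  rw [integral_add e2 e3, integral_add hf2 e1, integral_const_mul, integral_const_mul,
    integral_const_mul]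
  have : (∫ x, (f x * conj (g x)).re) = (∫ x, f x * conj (g x)).re := by
    simpa [RCLike.re_to_complex] using integral_re hfg
  rw [this]

/-- Perturbation `u + t θ` of a `WFun`. -/
def pert (u : WFun N) (t : ℝ) (θ : WFun N) : WFun N where
  toFun := fun x => u.toFun x + (t : ℂ) * θ.toFun x
  grad := fun x => u.grad x + (t : ℂ) • θ.grad x

/-- Real rescaling `s • u` of a `WFun`. -/
def rs (s : ℝ) (u : WFun N) : WFun N where
  toFun := fun x => (s : ℂ) * u.toFun x
  grad := fun x => (s : ℂ) • u.grad x

lemma pert_toFun (u : WFun N) (t : ℝ) (θ : WFun N) (x : Rn N) :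
    (pert u t θ).toFun x = u.toFun x + (t : ℂ) * θ.toFun x := rfl

lemma pert_grad (u : WFun N) (t : ℝ) (θ : WFun N) (x : Rn N) (i : Fin N) :
    (pert u t θ).grad x i = u.grad x i + (t : ℂ) * θ.grad x i := by
  simp [pert, smul_eq_mul]

lemma rs_grad (s : ℝ) (u : WFun N) (x : Rn N) (i : Fin N) :
    (rs s u).grad x i = (s : ℂ) * u.grad x i := by
  simp [rs, smul_eq_mul]

lemma norm_pilp_sq (y : Cn N) : ‖y‖ ^ 2 = ∑ i, ‖y i‖ ^ 2 := by
  rw [EuclideanSpace.norm_eq]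
  rw [Real.sq_sqrt (by positivity)]

/-- `msq` expansion along a perturbation. -/
lemma msq_expand {u θ : WFun N} (hu : MemLp u.toFun 2 (volume : Measure (Rn N)))
    (hθ : MemLp θ.toFun 2 (volume : Measure (Rn N))) (t : ℝ) :
    msq (pert u t θ) = msq u
      + t * (2 * (∫ x, u.toFun x * conj (θ.toFun x)).re) + t ^ 2 * msq θ :=
  l2_expand hu hθ t

/-- `kin` expansion along a perturbation. -/
lemma kin_expand {u θ : WFun N} (hu : MemLp u.grad 2 (volume : Measure (Rn N)))
    (hθ : MemLp θ.grad 2 (volume : Measure (Rn N))) (t : ℝ) :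
    kin (pert u t θ) = kin u
      + t * (2 * (∫ x, ∑ i, u.grad x i * conj (θ.grad x i)).re) + t ^ 2 * kin θ := by
  have hui : ∀ i : Fin N, MemLp (fun x => u.grad x i) 2 (volume : Measure (Rn N)) :=
    fun i => memLp_comp2 hu i
  have hθi : ∀ i : Fin N, MemLp (fun x => θ.grad x i) 2 (volume : Measure (Rn N)) :=
    fun i => memLp_comp2 hθ i
  have hsum : ∀ (f : WFun N), MemLp f.grad 2 (volume : Measure (Rn N)) →
      kin f = ∑ i, ∫ x, ‖f.grad x i‖ ^ 2 := by
    intro f hf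
    rw [kin]
    rw [show (fun x => ‖f.grad x‖ ^ 2) = fun x => ∑ i, ‖f.grad x i‖ ^ 2 by
      funext x; exact norm_pilp_sq _]
    rw [integral_finset_sum _ (fun i _ =>
      (memLp_two_iff_integrable_sq_norm (memLp_comp2 hf i).1).1 (memLp_comp2 hf i))]
  have hpertL : MemLp (pert u t θ).grad 2 (volume : Measure (Rn N)) := by
    exact hu.add (hθ.const_smul ((t : ℂ)))
  rw [hsum _ hpertL, hsum _ hu, hsum _ hθ]
  have hcomp : ∀ i : Fin N, (∫ x, ‖(pert u t θ).grad x i‖ ^ 2)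
      = (∫ x, ‖u.grad x i‖ ^ 2) + t * (2 * (∫ x, u.grad x i * conj (θ.grad x i)).re)
        + t ^ 2 * ∫ x, ‖θ.grad x i‖ ^ 2 := by
    intro i
    have := l2_expand (hui i) (hθi i) t
    simpa [pert_grad] using this
  rw [Finset.sum_congr rfl (fun i _ => hcomp i)]
  rw [Finset.sum_add_distrib, Finset.sum_add_distrib, ← Finset.mul_sum, ← Finset.mul_sum,
    ← Finset.mul_sum]
  congr 3
  rw [← Complex.re_sum, ← integral_finset_sum _ (fun i _ => integrable_mul_conj (hui i) (hθi i))]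


/-! ### Scaling lemmas -/

lemma msq_rs (s : ℝ) (u : WFun N) : msq (rs s u) = s ^ 2 * msq u := by
  unfold msq
  rw [show (fun x => ‖(rs s u).toFun x‖ ^ 2) = fun x => s ^ 2 * ‖u.toFun x‖ ^ 2 by
    funext x
    simp [rs, norm_mul, Complex.norm_real, mul_pow, sq_abs]]
  rw [integral_const_mul]

lemma kin_rs (s : ℝ) (u : WFun N) : kin (rs s u) = s ^ 2 * kin u := by
  unfold kin
  rw [show (fun x => ‖(rs s u).grad x‖ ^ 2) = fun x => s ^ 2 * ‖u.grad x‖ ^ 2 by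
    funext x
    simp [rs, norm_smul, Complex.norm_real, mul_pow, sq_abs]]
  rw [integral_const_mul]

lemma Vraw_rs (b : ℝ) (c : Rn N) (s : ℝ) (u v w : WFun N) :
    Vraw b c (rs s u).toFun (rs s v).toFun (rs s w).toFun
      = s ^ 3 * Vraw b c u.toFun v.toFun w.toFun := by
  unfold Vraw
  rw [show (fun x => phase b c x * (rs s u).toFun x * (rs s v).toFun x
        * conj ((rs s w).toFun x))
      = fun x => ((s ^ 3 : ℝ) : ℂ) * (phase b c x * u.toFun x * v.toFun x
        * conj (w.toFun x)) by
    funext x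
    simp only [rs, map_mul, Complex.conj_ofReal]
    push_cast
    ring]
  rw [integral_const_mul]
  rw [Complex.re_ofReal_mul]

lemma Qt_rs (g1 g2 g3 om s : ℝ) (c : Rn N) (u v w : WFun N) :
    Qt g1 g2 g3 om c (rs s u) (rs s v) (rs s w) = s ^ 2 * Qt g1 g2 g3 om c u v w := by
  unfold Qt Kfun
  rw [kin_rs, kin_rs, kin_rs, msq_rs, msq_rs, msq_rs]
  ring

lemma Vt_rs (g1 g2 g3 s : ℝ) (c : Rn N) (u v w : WFun N) :
    Vt g1 g2 g3 c (rs s u) (rs s v) (rs s w) = s ^ 3 * Vt g1 g2 g3 c u v w :=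
  Vraw_rs _ _ _ _ _ _

/-! ### Positivity -/

lemma msq_nonneg (u : WFun N) : 0 ≤ msq u := integral_nonneg fun x => by positivity

lemma kin_nonneg (u : WFun N) : 0 ≤ kin u := integral_nonneg fun x => by positivity

lemma Qt_nonneg {g1 g2 g3 om : ℝ} {c : Rn N}
    (h1 : 0 ≤ g1 * om - g1 ^ 2 * ‖c‖ ^ 2 / 4) (h2 : 0 ≤ g2 * om - g2 ^ 2 * ‖c‖ ^ 2 / 4)
    (h3 : 0 ≤ 2 * g3 * om - g3 ^ 2 * ‖c‖ ^ 2 / 4) (u v w : WFun N) :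
    0 ≤ Qt g1 g2 g3 om c u v w := by
  unfold Qt Kfun
  have := kin_nonneg u; have := kin_nonneg v; have := kin_nonneg w
  have := mul_nonneg h1 (msq_nonneg u)
  have := mul_nonneg h2 (msq_nonneg v)
  have := mul_nonneg h3 (msq_nonneg w)
  linarith

lemma isZero_of_msq_eq_zero {u : WFun N} (hu : MemLp u.toFun 2 (volume : Measure (Rn N)))
    (h : msq u = 0) : u.IsZero := by
  have hi : Integrable (fun x => ‖u.toFun x‖ ^ 2) (volume : Measure (Rn N)) :=
    (memLp_two_iff_integrable_sq_norm hu.1).1 hu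
  have h0 := (integral_eq_zero_iff_of_nonneg (fun x => by positivity) hi).1 h
  filter_upwards [h0] with x hx
  have : ‖u.toFun x‖ ^ 2 = 0 := hx
  simpa [pow_eq_zero_iff] using this

lemma triv_of_Qt_eq_zero {g1 g2 g3 om : ℝ} {c : Rn N}
    (h1 : 0 < g1 * om - g1 ^ 2 * ‖c‖ ^ 2 / 4) (h2 : 0 < g2 * om - g2 ^ 2 * ‖c‖ ^ 2 / 4)
    (h3 : 0 < 2 * g3 * om - g3 ^ 2 * ‖c‖ ^ 2 / 4) {u v w : WFun N}
    (hu : MemLp u.toFun 2 (volume : Measure (Rn N)))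
    (hv : MemLp v.toFun 2 (volume : Measure (Rn N)))
    (hw : MemLp w.toFun 2 (volume : Measure (Rn N)))
    (hQ : Qt g1 g2 g3 om c u v w = 0) : Triv u v w := by
  have hK : (0:ℝ) ≤ Kfun u v w := by
    unfold Kfun
    have := kin_nonneg u; have := kin_nonneg v; have := kin_nonneg w; linarith
  have hmu : msq u = 0 := by
    unfold Qt at hQ
    nlinarith [mul_nonneg h2.le (msq_nonneg v), mul_nonneg h3.le (msq_nonneg w),
      mul_nonneg h1.le (msq_nonneg u), msq_nonneg u]
  have hmv : msq v = 0 := by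
    unfold Qt at hQ
    nlinarith [mul_nonneg h2.le (msq_nonneg v), mul_nonneg h3.le (msq_nonneg w),
      mul_nonneg h1.le (msq_nonneg u), msq_nonneg v]
  have hmw : msq w = 0 := by
    unfold Qt at hQ
    nlinarith [mul_nonneg h2.le (msq_nonneg v), mul_nonneg h3.le (msq_nonneg w),
      mul_nonneg h1.le (msq_nonneg u), msq_nonneg w]
  exact ⟨isZero_of_msq_eq_zero hu hmu, isZero_of_msq_eq_zero hv hmv,
    isZero_of_msq_eq_zero hw hmw⟩

lemma Vraw_zero_left {b : ℝ} {c : Rn N} {u : Rn N → ℂ} (v w : Rn N → ℂ)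
    (hu : u =ᵐ[(volume : Measure (Rn N))] 0) : Vraw b c u v w = 0 := by
  unfold Vraw
  rw [integral_congr_ae (g := fun _ => (0:ℂ))]
  · simp
  · filter_upwards [hu] with x hx; simp [hx]

lemma Vraw_zero_mid {b : ℝ} {c : Rn N} {v : Rn N → ℂ} (u w : Rn N → ℂ)
    (hv : v =ᵐ[(volume : Measure (Rn N))] 0) : Vraw b c u v w = 0 := by
  unfold Vraw
  rw [integral_congr_ae (g := fun _ => (0:ℂ))]
  · simp
  · filter_upwards [hv] with x hx; simp [hx]

lemma Vraw_zero_right {b : ℝ} {c : Rn N} {w : Rn N → ℂ} (u v : Rn N → ℂ)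
    (hw : w =ᵐ[(volume : Measure (Rn N))] 0) : Vraw b c u v w = 0 := by
  unfold Vraw
  rw [integral_congr_ae (g := fun _ => (0:ℂ))]
  · simp
  · filter_upwards [hw] with x hx; simp [hx]


/-! ### Test functions as `WFun`s -/

/-- A smooth compactly supported function bundled with its gradient. -/
def tw (θ : Rn N → ℂ) : WFun N where
  toFun := θ
  grad := fun x => (WithLp.equiv 2 (Fin N → ℂ)).symm fun i =>
    fderiv ℝ θ x (EuclideanSpace.single i (1 : ℝ))

lemma tw_grad (θ : Rn N → ℂ) (x : Rn N) (i : Fin N) :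
    (tw θ).grad x i = fderiv ℝ θ x (EuclideanSpace.single i (1 : ℝ)) := rfl

lemma continuous_dtest {θ : Rn N → ℂ} (hθ : ContDiff ℝ (⊤ : ℕ∞) θ) (i : Fin N) :
    Continuous fun x => fderiv ℝ θ x (EuclideanSpace.single i (1 : ℝ)) :=
  (hθ.continuous_fderiv (by simp)).clm_apply continuous_const

lemma hcs_dtest {θ : Rn N → ℂ} (hθc : HasCompactSupport θ) (i : Fin N) :
    HasCompactSupport fun x => fderiv ℝ θ x (EuclideanSpace.single i (1 : ℝ)) :=
  hθc.fderiv_apply (𝕜 := ℝ) _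

lemma memLp_test {θ : Rn N → ℂ} (hθ : Continuous θ) (hθc : HasCompactSupport θ) :
    MemLp θ 2 (volume : Measure (Rn N)) :=
  hθ.memLp_of_hasCompactSupport hθc

lemma inH1_tw {θ : Rn N → ℂ} (hθ : ContDiff ℝ (⊤ : ℕ∞) θ) (hθc : HasCompactSupport θ) :
    (tw θ).InH1 := by
  refine ⟨?_, memLp_test hθ.continuous hθc, ?_⟩
  · intro η hη hηc i
    have hcd : Continuous fun x => fderiv ℝ η x (EuclideanSpace.single i (1 : ℝ)) :=
      continuous_dtest hη i
    have hcdθ : Continuous fun x => fderiv ℝ θ x (EuclideanSpace.single i (1 : ℝ)) :=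
      continuous_dtest hθ i
    have h1 : Integrable (fun x => fderiv ℝ θ x (EuclideanSpace.single i (1 : ℝ)) * η x)
        (volume : Measure (Rn N)) := by
      apply Continuous.integrable_of_hasCompactSupport (hcdθ.mul hη.continuous)
      exact (hcs_dtest hθc i).mul_right
    have h2 : Integrable (fun x => θ x * fderiv ℝ η x (EuclideanSpace.single i (1 : ℝ)))
        (volume : Measure (Rn N)) := by
      apply Continuous.integrable_of_hasCompactSupport (hθ.continuous.mul hcd)
      exact hθc.mul_right
    have h3 : Integrable (fun x => θ x * η x) (volume : Measure (Rn N)) := by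
      apply Continuous.integrable_of_hasCompactSupport (hθ.continuous.mul hη.continuous)
      exact hθc.mul_right
    have := integral_mul_fderiv_eq_neg_fderiv_mul_of_integrable h1 h2 h3
      (fun x _ => hθ.differentiable (by simp) x) (fun x _ => hη.differentiable (by simp) x)
    exact this
  · apply Continuous.memLp_of_hasCompactSupport (f := (tw θ).grad)
    · exact (PiLp.continuous_toLp 2 (fun _ : Fin N => ℂ)).comp
        (continuous_pi fun i => continuous_dtest hθ i)
    · apply HasCompactSupport.comp_left (g := fun L : Rn N →L[ℝ] ℂ =>
        ((WithLp.equiv 2 (Fin N → ℂ)).symm fun i => L (EuclideanSpace.single i (1 : ℝ))))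
        (hθc.fderiv (𝕜 := ℝ))
      ext i
      simp

/-! ### `H¹` closure properties -/

lemma inH1_pert {u θ : WFun N} (hu : u.InH1) (hθ : θ.InH1) (t : ℝ) :
    (pert u t θ).InH1 := by
  obtain ⟨hwg, hu2, hug⟩ := hu
  obtain ⟨hwgθ, hθ2, hθg⟩ := hθ
  refine ⟨?_, ?_, ?_⟩
  · intro η hη hηc i
    have hd2 : MemLp (fun x => fderiv ℝ η x (EuclideanSpace.single i (1 : ℝ))) 2
        (volume : Measure (Rn N)) := memLp_test (continuous_dtest hη i) (hcs_dtest hηc i)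
    have hη2 : MemLp η 2 (volume : Measure (Rn N)) := memLp_test hη.continuous hηc
    have iu : Integrable (fun x =>
        u.toFun x * fderiv ℝ η x (EuclideanSpace.single i (1 : ℝ)))
        (volume : Measure (Rn N)) := integrable_mul2 hu2 hd2
    have iθ : Integrable (fun x =>
        θ.toFun x * fderiv ℝ η x (EuclideanSpace.single i (1 : ℝ)))
        (volume : Measure (Rn N)) := integrable_mul2 hθ2 hd2
    have igu : Integrable (fun x => u.grad x i * η x) (volume : Measure (Rn N)) :=
      integrable_mul2 (memLp_comp2 hug i) hη2
    have igθ : Integrable (fun x => θ.grad x i * η x) (volume : Measure (Rn N)) :=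
      integrable_mul2 (memLp_comp2 hθg i) hη2
    have e1 : (∫ x, (pert u t θ).toFun x * fderiv ℝ η x (EuclideanSpace.single i (1 : ℝ)))
        = (∫ x, u.toFun x * fderiv ℝ η x (EuclideanSpace.single i (1 : ℝ)))
          + (t : ℂ) * ∫ x, θ.toFun x * fderiv ℝ η x (EuclideanSpace.single i (1 : ℝ)) := by
      rw [show (fun x => (pert u t θ).toFun x * fderiv ℝ η x (EuclideanSpace.single i (1 : ℝ)))
          = fun x => u.toFun x * fderiv ℝ η x (EuclideanSpace.single i (1 : ℝ))
            + (t : ℂ) * (θ.toFun x * fderiv ℝ η x (EuclideanSpace.single i (1 : ℝ))) by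
        funext x; simp only [pert_toFun]; ring]
      rw [integral_add iu (iθ.const_mul _), integral_const_mul]
    have e2 : (∫ x, (pert u t θ).grad x i * η x)
        = (∫ x, u.grad x i * η x) + (t : ℂ) * ∫ x, θ.grad x i * η x := by
      rw [show (fun x => (pert u t θ).grad x i * η x)
          = fun x => u.grad x i * η x + (t : ℂ) * (θ.grad x i * η x) by
        funext x; rw [pert_grad]; ring]
      rw [integral_add igu (igθ.const_mul _), integral_const_mul]
    rw [e1, e2, hwg η hη hηc i, hwgθ η hη hηc i]
    ring
  · exact hu2.add (hθ2.const_mul _)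
  · exact hug.add (hθg.const_smul (t : ℂ))

lemma inH1_rs {u : WFun N} (hu : u.InH1) (s : ℝ) : (rs s u).InH1 := by
  obtain ⟨hwg, hu2, hug⟩ := hu
  refine ⟨?_, hu2.const_mul _, hug.const_smul (s : ℂ)⟩
  intro η hη hηc i
  have hd2 : MemLp (fun x => fderiv ℝ η x (EuclideanSpace.single i (1 : ℝ))) 2
      (volume : Measure (Rn N)) := memLp_test (continuous_dtest hη i) (hcs_dtest hηc i)
  have hη2 : MemLp η 2 (volume : Measure (Rn N)) := memLp_test hη.continuous hηc
  have iu : Integrable (fun x =>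
      u.toFun x * fderiv ℝ η x (EuclideanSpace.single i (1 : ℝ)))
      (volume : Measure (Rn N)) := integrable_mul2 hu2 hd2
  have igu : Integrable (fun x => u.grad x i * η x) (volume : Measure (Rn N)) :=
    integrable_mul2 (memLp_comp2 hug i) hη2
  have e1 : (∫ x, (rs s u).toFun x * fderiv ℝ η x (EuclideanSpace.single i (1 : ℝ)))
      = (s : ℂ) * ∫ x, u.toFun x * fderiv ℝ η x (EuclideanSpace.single i (1 : ℝ)) := by
    rw [show (fun x => (rs s u).toFun x * fderiv ℝ η x (EuclideanSpace.single i (1 : ℝ)))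
        = fun x => (s : ℂ) * (u.toFun x * fderiv ℝ η x (EuclideanSpace.single i (1 : ℝ))) by
      funext x; simp only [rs]; ring]
    rw [integral_const_mul]
  have e2 : (∫ x, (rs s u).grad x i * η x) = (s : ℂ) * ∫ x, u.grad x i * η x := by
    rw [show (fun x => (rs s u).grad x i * η x)
        = fun x => (s : ℂ) * (u.grad x i * η x) by
      funext x; rw [rs_grad]; ring]
    rw [integral_const_mul]
  rw [e1, e2, hwg η hη hηc i]
  ring


/-! ### The variational calculus lemma -/

lemma key_poly (q0 q1 q2 v0 v1 : ℝ) (hq0 : 0 < q0) (hneh : 2 * q0 = 3 * v0)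
    (hge : ∀ t : ℝ, 0 < q0 + q1 * t + q2 * t ^ 2 → 0 < v0 + v1 * t →
      27 * (q0 - v0) * (v0 + v1 * t) ^ 2 ≤ 4 * (q0 + q1 * t + q2 * t ^ 2) ^ 3) :
    q1 = v1 := by
  have hv0 : 0 < v0 := by linarith
  set Q : ℝ → ℝ := fun t => q0 + q1 * t + q2 * t ^ 2 with hQdef
  set V : ℝ → ℝ := fun t => v0 + v1 * t with hVdef
  set ψ : ℝ → ℝ := fun t => 4 * Q t ^ 3 - 27 * (q0 - v0) * V t ^ 2 with hψdef
  have hQc : Continuous Q := by fun_prop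
  have hVc : Continuous V := by fun_prop
  have hQ0 : Q 0 = q0 := by simp [hQdef]
  have hV0 : V 0 = v0 := by simp [hVdef]
  have hψ0 : ψ 0 = 0 := by
    simp only [hψdef, hQ0, hV0]
    linear_combination (2 * q0 ^ 2 + 3 * q0 * v0 - 9 * v0 ^ 2) * hneh
  have hQev : ∀ᶠ t in nhds 0, 0 < Q t :=
    eventually_of_mem ((isOpen_Ioi.preimage hQc).mem_nhds
      (by simpa [hQ0] using hq0)) (fun t ht => ht)
  have hVev : ∀ᶠ t in nhds 0, 0 < V t :=
    eventually_of_mem ((isOpen_Ioi.preimage hVc).mem_nhds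
      (by simpa [hV0] using hv0)) (fun t ht => ht)
  have hmin : IsLocalMin ψ 0 := by
    filter_upwards [hQev, hVev] with t h1 h2
    have hineq := hge t (by simpa [hQdef] using h1) (by simpa [hVdef] using h2)
    have et : ψ t = 4 * (q0 + q1 * t + q2 * t ^ 2) ^ 3
        - 27 * (q0 - v0) * (v0 + v1 * t) ^ 2 := by simp [hψdef, hQdef, hVdef]
    rw [hψ0, et]
    linarith
  have hQd : HasDerivAt Q (q1) 0 := by
    have : HasDerivAt (fun t : ℝ => q0 + q1 * t + q2 * t ^ 2)
        (0 + q1 * 1 + q2 * (2 * 0 ^ 1)) 0 := by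
      exact (((hasDerivAt_const (0:ℝ) q0).add ((hasDerivAt_id (0:ℝ)).const_mul q1)).add
        ((hasDerivAt_pow 2 (0:ℝ)).const_mul q2))
    simpa using this
  have hVd : HasDerivAt V (v1) 0 := by
    have : HasDerivAt (fun t : ℝ => v0 + v1 * t) (0 + v1 * 1) 0 :=
      (hasDerivAt_const (0:ℝ) v0).add ((hasDerivAt_id (0:ℝ)).const_mul v1)
    exact this.congr_deriv (by ring)
  have hψd : HasDerivAt ψ
      (4 * (3 * Q 0 ^ 2 * q1) - 27 * (q0 - v0) * (2 * V 0 ^ 1 * v1)) 0 := by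
    have h1 : HasDerivAt (fun t => 4 * Q t ^ 3) (4 * (3 * Q 0 ^ 2 * q1)) 0 := by
      simpa [mul_comm, mul_assoc, mul_left_comm] using ((hQd.pow 3).const_mul (4:ℝ))
    have h2 : HasDerivAt (fun t => 27 * (q0 - v0) * V t ^ 2)
        (27 * (q0 - v0) * (2 * V 0 ^ 1 * v1)) 0 := by
      simpa [mul_comm, mul_assoc, mul_left_comm] using ((hVd.pow 2).const_mul (27 * (q0 - v0)))
    exact h1.sub h2
  have h0 : 4 * (3 * q0 ^ 2 * q1) - 27 * (q0 - v0) * (2 * v0 ^ 1 * v1) = 0 := by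
    have := hmin.deriv_eq_zero
    rw [hψd.deriv] at this
    rw [hQ0, hV0] at this
    exact this
  have key : 12 * q0 ^ 2 * (q1 - v1) = 0 := by
    linear_combination h0 + v1 * (18 * v0 - 6 * q0) * hneh
  have hne : (12 * q0 ^ 2 : ℝ) ≠ 0 := by positivity
  have := (mul_eq_zero.mp key).resolve_left hne
  linarith

/-! ### Properties of the Nehari level -/

lemma muTilde_le {g1 g2 g3 om : ℝ} {c : Rn N}
    (h1 : 0 ≤ g1 * om - g1 ^ 2 * ‖c‖ ^ 2 / 4) (h2 : 0 ≤ g2 * om - g2 ^ 2 * ‖c‖ ^ 2 / 4)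
    (h3 : 0 ≤ 2 * g3 * om - g3 ^ 2 * ‖c‖ ^ 2 / 4)
    {u' v' w' : WFun N} (hu' : u'.InH1) (hv' : v'.InH1) (hw' : w'.InH1)
    (hnt' : ¬ Triv u' v' w') (hN : Nt g1 g2 g3 om c u' v' w' = 0) :
    muTilde g1 g2 g3 om c ≤ St g1 g2 g3 om c u' v' w' := by
  unfold muTilde mutX
  apply csInf_le
  · refine ⟨0, ?_⟩
    rintro s ⟨a, b, d, ha, hb, hd, hnt2, hN2, rfl⟩
    have hQ : 0 ≤ Qt g1 g2 g3 om c a b d := Qt_nonneg h1 h2 h3 a b d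
    unfold Nt at hN2
    unfold St
    linarith
  · exact ⟨u', v', w', hu', hv', hw', hnt', hN, rfl⟩

lemma triv_rs {s : ℝ} (hs : s ≠ 0) {u v w : WFun N}
    (h : Triv (rs s u) (rs s v) (rs s w)) : Triv u v w := by
  obtain ⟨h1, h2, h3⟩ := h
  have hsc : (s : ℂ) ≠ 0 := by exact_mod_cast hs
  refine ⟨?_, ?_, ?_⟩
  · filter_upwards [h1] with x hx
    have hx' : (s : ℂ) * u.toFun x = 0 := hx
    simpa [hsc] using (mul_eq_zero.mp hx').resolve_left hsc
  · filter_upwards [h2] with x hx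
    have hx' : (s : ℂ) * v.toFun x = 0 := hx
    simpa [hsc] using (mul_eq_zero.mp hx').resolve_left hsc
  · filter_upwards [h3] with x hx
    have hx' : (s : ℂ) * w.toFun x = 0 := hx
    simpa [hsc] using (mul_eq_zero.mp hx').resolve_left hsc

/-- The fibering estimate: for any `H¹` triple with positive quadratic and cubic parts,
`μ̃ ≤ (4/27) Q³ / V²`. -/
lemma mu_le_fiber {g1 g2 g3 om : ℝ} {c : Rn N}
    (h1 : 0 ≤ g1 * om - g1 ^ 2 * ‖c‖ ^ 2 / 4) (h2 : 0 ≤ g2 * om - g2 ^ 2 * ‖c‖ ^ 2 / 4)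
    (h3 : 0 ≤ 2 * g3 * om - g3 ^ 2 * ‖c‖ ^ 2 / 4)
    {u' v' w' : WFun N} (hu' : u'.InH1) (hv' : v'.InH1) (hw' : w'.InH1)
    (hnt' : ¬ Triv u' v' w') (hQ : 0 < Qt g1 g2 g3 om c u' v' w')
    (hV : 0 < Vt g1 g2 g3 c u' v' w') :
    muTilde g1 g2 g3 om c
      ≤ 4 * (Qt g1 g2 g3 om c u' v' w') ^ 3 / (27 * (Vt g1 g2 g3 c u' v' w') ^ 2) := by
  set Q := Qt g1 g2 g3 om c u' v' w' with hQdef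
  set V := Vt g1 g2 g3 c u' v' w' with hVdef
  set s : ℝ := 2 * Q / (3 * V) with hsdef
  have hs : 0 < s := by positivity
  have hNz : Nt g1 g2 g3 om c (rs s u') (rs s v') (rs s w') = 0 := by
    unfold Nt
    rw [Qt_rs, Vt_rs, ← hQdef, ← hVdef, hsdef]
    field_simp
    ring
  have hle := muTilde_le h1 h2 h3 (inH1_rs hu' s) (inH1_rs hv' s) (inH1_rs hw' s)
    (fun ht => hnt' (triv_rs (ne_of_gt hs) ht)) hNz
  have hSt : St g1 g2 g3 om c (rs s u') (rs s v') (rs s w')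
      = 4 * Q ^ 3 / (27 * V ^ 2) := by
    unfold St
    rw [Qt_rs, Vt_rs, ← hQdef, ← hVdef, hsdef]
    field_simp
    ring
  rw [hSt] at hle
  exact hle


/-! ### Phase and cubic-term integrability -/

lemma conj_phase (b : ℝ) (c x : Rn N) : conj (phase b c x) = phase (-b) c x := by
  unfold phase
  rw [← Complex.exp_conj]
  congr 1
  simp only [map_mul, Complex.conj_I, Complex.conj_ofReal]
  push_cast
  ring

lemma integrable_theta_pair {θ : Rn N → ℂ} (hθ : Continuous θ) (hθc : HasCompactSupport θ)
    (b : ℝ) (c : Rn N) {f g : Rn N → ℂ} (hf : MemLp f 2 (volume : Measure (Rn N)))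
    (hg : MemLp g 2 (volume : Measure (Rn N))) :
    Integrable (fun x => phase b c x * θ x * (f x * conj (g x)))
      (volume : Measure (Rn N)) := by
  have h1 : Integrable (fun x => f x * conj (g x)) (volume : Measure (Rn N)) :=
    integrable_mul_conj hf hg
  obtain ⟨C, hC⟩ := hθ.bounded_above_of_compact_support hθc
  apply h1.bdd_mul (c := C) ((aesm_phase b c).mul hθ.aestronglyMeasurable)
  refine Filter.Eventually.of_forall (fun x => ?_)
  have : ‖(phase b c * θ) x‖ = ‖phase b c x‖ * ‖θ x‖ := by
    simp [Pi.mul_apply, norm_mul]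
  rw [this, norm_phase, one_mul]
  exact hC x

/-! ### Expansion of the cubic term -/

lemma Vraw_expand_left {b : ℝ} {c : Rn N} {u θ v w : Rn N → ℂ}
    (hcore : Integrable (fun x => phase b c x * u x * v x * conj (w x))
      (volume : Measure (Rn N)))
    (hθ : Integrable (fun x => phase b c x * θ x * v x * conj (w x))
      (volume : Measure (Rn N))) (t : ℝ) :
    Vraw b c (fun x => u x + (t : ℂ) * θ x) v w
      = Vraw b c u v w + (Vraw b c θ v w) * t := by
  unfold Vraw
  rw [show (fun x => phase b c x * (u x + (t : ℂ) * θ x) * v x * conj (w x))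
      = fun x => phase b c x * u x * v x * conj (w x)
        + (t : ℂ) * (phase b c x * θ x * v x * conj (w x)) by
    funext x; ring]
  rw [integral_add hcore (hθ.const_mul _), integral_const_mul, Complex.add_re,
    Complex.re_ofReal_mul]
  ring

lemma Vraw_expand_mid {b : ℝ} {c : Rn N} {u θ v w : Rn N → ℂ}
    (hcore : Integrable (fun x => phase b c x * u x * v x * conj (w x))
      (volume : Measure (Rn N)))
    (hθ : Integrable (fun x => phase b c x * u x * θ x * conj (w x))
      (volume : Measure (Rn N))) (t : ℝ) :
    Vraw b c u (fun x => v x + (t : ℂ) * θ x) w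
      = Vraw b c u v w + (Vraw b c u θ w) * t := by
  unfold Vraw
  rw [show (fun x => phase b c x * u x * (v x + (t : ℂ) * θ x) * conj (w x))
      = fun x => phase b c x * u x * v x * conj (w x)
        + (t : ℂ) * (phase b c x * u x * θ x * conj (w x)) by
    funext x; ring]
  rw [integral_add hcore (hθ.const_mul _), integral_const_mul, Complex.add_re,
    Complex.re_ofReal_mul]
  ring

lemma Vraw_expand_right {b : ℝ} {c : Rn N} {u v w θ : Rn N → ℂ}
    (hcore : Integrable (fun x => phase b c x * u x * v x * conj (w x))
      (volume : Measure (Rn N)))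
    (hθ : Integrable (fun x => phase b c x * u x * v x * conj (θ x))
      (volume : Measure (Rn N))) (t : ℝ) :
    Vraw b c u v (fun x => w x + (t : ℂ) * θ x)
      = Vraw b c u v w + (Vraw b c u v θ) * t := by
  unfold Vraw
  rw [show (fun x => phase b c x * u x * v x * conj (w x + (t : ℂ) * θ x))
      = fun x => phase b c x * u x * v x * conj (w x)
        + (t : ℂ) * (phase b c x * u x * v x * conj (θ x)) by
    funext x
    simp only [map_add, map_mul, Complex.conj_ofReal]
    ring]
  rw [integral_add hcore (hθ.const_mul _), integral_const_mul, Complex.add_re,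
    Complex.re_ofReal_mul]
  ring


lemma tw_toFun (θ : Rn N → ℂ) : (tw θ).toFun = θ := rfl

lemma integrable_theta_pair' {θ : Rn N → ℂ} (hθ : Continuous θ) (hθc : HasCompactSupport θ)
    (b : ℝ) (c : Rn N) {f g : Rn N → ℂ} (hf : MemLp f 2 (volume : Measure (Rn N)))
    (hg : MemLp g 2 (volume : Measure (Rn N))) :
    Integrable (fun x => phase b c x * f x * g x * conj (θ x))
      (volume : Measure (Rn N)) := by
  have h1 : Integrable (fun x => f x * g x) (volume : Measure (Rn N)) :=
    integrable_mul2 hf hg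
  obtain ⟨C, hC⟩ := hθ.bounded_above_of_compact_support hθc
  have h2 : Integrable (fun x => (phase b c x * conj (θ x)) * (f x * g x))
      (volume : Measure (Rn N)) := by
    apply h1.bdd_mul (c := C) ((aesm_phase b c).mul (continuous_star.comp hθ).aestronglyMeasurable)
    refine Filter.Eventually.of_forall (fun x => ?_)
    calc ‖phase b c x * conj (θ x)‖ = ‖phase b c x‖ * ‖conj (θ x)‖ := norm_mul _ _
    _ = ‖θ x‖ := by rw [norm_phase, one_mul, RCLike.norm_conj]
    _ ≤ C := hC x
  rw [show (fun x => phase b c x * f x * g x * conj (θ x))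
      = fun x => (phase b c x * conj (θ x)) * (f x * g x) by funext x; ring]
  exact h2

/-- The Euler–Lagrange real-part identity obtained by perturbing the first slot. -/
lemma reid1 {g1 g2 g3 om : ℝ} {c : Rn N}
    (hc1 : 0 < g1 * om - g1 ^ 2 * ‖c‖ ^ 2 / 4) (hc2 : 0 < g2 * om - g2 ^ 2 * ‖c‖ ^ 2 / 4)
    (hc3 : 0 < 2 * g3 * om - g3 ^ 2 * ‖c‖ ^ 2 / 4)
    {u v w : WFun N} (hu : u.InH1) (hv : v.InH1) (hw : w.InH1)
    (hInt : Integrable (fun x => phase (betaC g1 g2 g3) c x * u.toFun x * v.toFun x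
      * conj (w.toFun x)) (volume : Measure (Rn N)))
    (hQpos : 0 < Qt g1 g2 g3 om c u v w)
    (hNz : Nt g1 g2 g3 om c u v w = 0)
    (hmin : St g1 g2 g3 om c u v w = muTilde g1 g2 g3 om c)
    (hvnz : ¬ v.IsZero)
    {θ : Rn N → ℂ} (hθs : ContDiff ℝ (⊤ : ℕ∞) θ) (hθc : HasCompactSupport θ) :
    (∫ x, ∑ i, u.grad x i * conj (fderiv ℝ θ x (EuclideanSpace.single i (1 : ℝ)))).re
      + (g1 * om - g1 ^ 2 * ‖c‖ ^ 2 / 4) * (∫ x, u.toFun x * conj (θ x)).re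
      = Vraw (betaC g1 g2 g3) c θ v.toFun w.toFun := by
  have hΘ1 : (tw θ).InH1 := inH1_tw hθs hθc
  have hθint' : Integrable (fun x => phase (betaC g1 g2 g3) c x * θ x * v.toFun x
      * conj (w.toFun x)) (volume : Measure (Rn N)) := by
    rw [show (fun x => phase (betaC g1 g2 g3) c x * θ x * v.toFun x * conj (w.toFun x))
        = fun x => phase (betaC g1 g2 g3) c x * θ x * (v.toFun x * conj (w.toFun x)) by
      funext x; ring]
    exact integrable_theta_pair hθs.continuous hθc _ c hv.2.1 hw.2.1
  have hq : ∀ t : ℝ, Qt g1 g2 g3 om c (pert u t (tw θ)) v w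
      = Qt g1 g2 g3 om c u v w
        + ((∫ x, ∑ i, u.grad x i * conj ((tw θ).grad x i)).re
            + (g1 * om - g1 ^ 2 * ‖c‖ ^ 2 / 4) * (∫ x, u.toFun x * conj (θ x)).re) * t
        + ((1/2) * kin (tw θ) + (1/2) * (g1 * om - g1 ^ 2 * ‖c‖ ^ 2 / 4) * msq (tw θ)) * t ^ 2
      := by
    intro t
    have e1 := kin_expand (u := u) (θ := tw θ) hu.2.2 hΘ1.2.2 t
    have e2 := msq_expand (u := u) (θ := tw θ) hu.2.1 hΘ1.2.1 t
    rw [tw_toFun] at e2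
    unfold Qt Kfun
    rw [e1, e2]
    ring
  have hV : ∀ t : ℝ, Vt g1 g2 g3 c (pert u t (tw θ)) v w
      = Vt g1 g2 g3 c u v w + (Vraw (betaC g1 g2 g3) c θ v.toFun w.toFun) * t :=
    fun t => Vraw_expand_left hInt hθint' t
  simp only [← tw_grad]
  set a1 : ℝ := g1 * om - g1 ^ 2 * ‖c‖ ^ 2 / 4 with ha1
  set q0 : ℝ := Qt g1 g2 g3 om c u v w with hq0d
  set v0 : ℝ := Vt g1 g2 g3 c u v w with hv0d
  set q1 : ℝ := (∫ x, ∑ i, u.grad x i * conj ((tw θ).grad x i)).re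
    + a1 * (∫ x, u.toFun x * conj (θ x)).re with hq1d
  set q2 : ℝ := (1/2) * kin (tw θ) + (1/2) * a1 * msq (tw θ) with hq2d
  set v1 : ℝ := Vraw (betaC g1 g2 g3) c θ v.toFun w.toFun with hv1d
  clear_value q0 v0 q1 q2 v1
  have h23 : 2 * q0 = 3 * v0 := by
    unfold Nt at hNz; rw [← hq0d, ← hv0d] at hNz; linarith
  have hmuv : muTilde g1 g2 g3 om c = q0 - v0 := by
    rw [← hmin]; unfold St; rw [← hq0d, ← hv0d]
  have hge : ∀ t : ℝ, 0 < q0 + q1 * t + q2 * t ^ 2 → 0 < v0 + v1 * t →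
      27 * (q0 - v0) * (v0 + v1 * t) ^ 2 ≤ 4 * (q0 + q1 * t + q2 * t ^ 2) ^ 3 := by
    intro t h1 h2
    have hQt : 0 < Qt g1 g2 g3 om c (pert u t (tw θ)) v w := by
      rw [hq t]; linarith
    have hVt : 0 < Vt g1 g2 g3 c (pert u t (tw θ)) v w := by
      rw [hV t]; linarith
    have hnt' : ¬ Triv (pert u t (tw θ)) v w := fun h => hvnz h.2.1
    have hf := mu_le_fiber hc1.le hc2.le hc3.le (inH1_pert hu hΘ1 t) hv hw hnt' hQt hVt
    rw [hq t, hV t, hmuv] at hf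
    have hpos : (0:ℝ) < 27 * (v0 + v1 * t) ^ 2 := by positivity
    have h4 := (le_div_iff₀ hpos).mp hf
    calc 27 * (q0 - v0) * (v0 + v1 * t) ^ 2
        = (q0 - v0) * (27 * (v0 + v1 * t) ^ 2) := by ring
      _ ≤ 4 * (q0 + q1 * t + q2 * t ^ 2) ^ 3 := h4
  have hfin := key_poly q0 q1 q2 v0 v1 hQpos h23 hge
  rw [hq1d, hv1d] at hfin
  linarith [hfin]


/-- The Euler–Lagrange real-part identity obtained by perturbing the second slot. -/
lemma reid2 {g1 g2 g3 om : ℝ} {c : Rn N}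
    (hc1 : 0 < g1 * om - g1 ^ 2 * ‖c‖ ^ 2 / 4) (hc2 : 0 < g2 * om - g2 ^ 2 * ‖c‖ ^ 2 / 4)
    (hc3 : 0 < 2 * g3 * om - g3 ^ 2 * ‖c‖ ^ 2 / 4)
    {u v w : WFun N} (hu : u.InH1) (hv : v.InH1) (hw : w.InH1)
    (hInt : Integrable (fun x => phase (betaC g1 g2 g3) c x * u.toFun x * v.toFun x
      * conj (w.toFun x)) (volume : Measure (Rn N)))
    (hQpos : 0 < Qt g1 g2 g3 om c u v w)
    (hNz : Nt g1 g2 g3 om c u v w = 0)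
    (hmin : St g1 g2 g3 om c u v w = muTilde g1 g2 g3 om c)
    (hunz : ¬ u.IsZero)
    {θ : Rn N → ℂ} (hθs : ContDiff ℝ (⊤ : ℕ∞) θ) (hθc : HasCompactSupport θ) :
    (∫ x, ∑ i, v.grad x i * conj (fderiv ℝ θ x (EuclideanSpace.single i (1 : ℝ)))).re
      + (g2 * om - g2 ^ 2 * ‖c‖ ^ 2 / 4) * (∫ x, v.toFun x * conj (θ x)).re
      = Vraw (betaC g1 g2 g3) c u.toFun θ w.toFun := by
  have hΘ1 : (tw θ).InH1 := inH1_tw hθs hθc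
  have hθint' : Integrable (fun x => phase (betaC g1 g2 g3) c x * u.toFun x * θ x
      * conj (w.toFun x)) (volume : Measure (Rn N)) := by
    rw [show (fun x => phase (betaC g1 g2 g3) c x * u.toFun x * θ x * conj (w.toFun x))
        = fun x => phase (betaC g1 g2 g3) c x * θ x * (u.toFun x * conj (w.toFun x)) by
      funext x; ring]
    exact integrable_theta_pair hθs.continuous hθc _ c hu.2.1 hw.2.1
  have hq : ∀ t : ℝ, Qt g1 g2 g3 om c u (pert v t (tw θ)) w
      = Qt g1 g2 g3 om c u v w
        + ((∫ x, ∑ i, v.grad x i * conj ((tw θ).grad x i)).re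
            + (g2 * om - g2 ^ 2 * ‖c‖ ^ 2 / 4) * (∫ x, v.toFun x * conj (θ x)).re) * t
        + ((1/2) * kin (tw θ) + (1/2) * (g2 * om - g2 ^ 2 * ‖c‖ ^ 2 / 4) * msq (tw θ)) * t ^ 2
      := by
    intro t
    have e1 := kin_expand (u := v) (θ := tw θ) hv.2.2 hΘ1.2.2 t
    have e2 := msq_expand (u := v) (θ := tw θ) hv.2.1 hΘ1.2.1 t
    rw [tw_toFun] at e2
    unfold Qt Kfun
    rw [e1, e2]
    ring
  have hV : ∀ t : ℝ, Vt g1 g2 g3 c u (pert v t (tw θ)) w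
      = Vt g1 g2 g3 c u v w + (Vraw (betaC g1 g2 g3) c u.toFun θ w.toFun) * t :=
    fun t => Vraw_expand_mid hInt hθint' t
  simp only [← tw_grad]
  set a2 : ℝ := g2 * om - g2 ^ 2 * ‖c‖ ^ 2 / 4 with ha2
  set q0 : ℝ := Qt g1 g2 g3 om c u v w with hq0d
  set v0 : ℝ := Vt g1 g2 g3 c u v w with hv0d
  set q1 : ℝ := (∫ x, ∑ i, v.grad x i * conj ((tw θ).grad x i)).re
    + a2 * (∫ x, v.toFun x * conj (θ x)).re with hq1d
  set q2 : ℝ := (1/2) * kin (tw θ) + (1/2) * a2 * msq (tw θ) with hq2d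
  set v1 : ℝ := Vraw (betaC g1 g2 g3) c u.toFun θ w.toFun with hv1d
  clear_value q0 v0 q1 q2 v1
  have h23 : 2 * q0 = 3 * v0 := by
    unfold Nt at hNz; rw [← hq0d, ← hv0d] at hNz; linarith
  have hmuv : muTilde g1 g2 g3 om c = q0 - v0 := by
    rw [← hmin]; unfold St; rw [← hq0d, ← hv0d]
  have hge : ∀ t : ℝ, 0 < q0 + q1 * t + q2 * t ^ 2 → 0 < v0 + v1 * t →
      27 * (q0 - v0) * (v0 + v1 * t) ^ 2 ≤ 4 * (q0 + q1 * t + q2 * t ^ 2) ^ 3 := by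
    intro t h1 h2
    have hQt : 0 < Qt g1 g2 g3 om c u (pert v t (tw θ)) w := by
      rw [hq t]; linarith
    have hVt : 0 < Vt g1 g2 g3 c u (pert v t (tw θ)) w := by
      rw [hV t]; linarith
    have hnt' : ¬ Triv u (pert v t (tw θ)) w := fun h => hunz h.1
    have hf := mu_le_fiber hc1.le hc2.le hc3.le hu (inH1_pert hv hΘ1 t) hw hnt' hQt hVt
    rw [hq t, hV t, hmuv] at hf
    have hpos : (0:ℝ) < 27 * (v0 + v1 * t) ^ 2 := by positivity
    have h4 := (le_div_iff₀ hpos).mp hf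
    calc 27 * (q0 - v0) * (v0 + v1 * t) ^ 2
        = (q0 - v0) * (27 * (v0 + v1 * t) ^ 2) := by ring
      _ ≤ 4 * (q0 + q1 * t + q2 * t ^ 2) ^ 3 := h4
  have hfin := key_poly q0 q1 q2 v0 v1 hQpos h23 hge
  rw [hq1d, hv1d] at hfin
  linarith [hfin]

/-- The Euler–Lagrange real-part identity obtained by perturbing the third slot. -/
lemma reid3 {g1 g2 g3 om : ℝ} {c : Rn N}
    (hc1 : 0 < g1 * om - g1 ^ 2 * ‖c‖ ^ 2 / 4) (hc2 : 0 < g2 * om - g2 ^ 2 * ‖c‖ ^ 2 / 4)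
    (hc3 : 0 < 2 * g3 * om - g3 ^ 2 * ‖c‖ ^ 2 / 4)
    {u v w : WFun N} (hu : u.InH1) (hv : v.InH1) (hw : w.InH1)
    (hInt : Integrable (fun x => phase (betaC g1 g2 g3) c x * u.toFun x * v.toFun x
      * conj (w.toFun x)) (volume : Measure (Rn N)))
    (hQpos : 0 < Qt g1 g2 g3 om c u v w)
    (hNz : Nt g1 g2 g3 om c u v w = 0)
    (hmin : St g1 g2 g3 om c u v w = muTilde g1 g2 g3 om c)
    (hunz : ¬ u.IsZero)
    {θ : Rn N → ℂ} (hθs : ContDiff ℝ (⊤ : ℕ∞) θ) (hθc : HasCompactSupport θ) :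
    (∫ x, ∑ i, w.grad x i * conj (fderiv ℝ θ x (EuclideanSpace.single i (1 : ℝ)))).re
      + (2 * g3 * om - g3 ^ 2 * ‖c‖ ^ 2 / 4) * (∫ x, w.toFun x * conj (θ x)).re
      = Vraw (betaC g1 g2 g3) c u.toFun v.toFun θ := by
  have hΘ1 : (tw θ).InH1 := inH1_tw hθs hθc
  have hθint' : Integrable (fun x => phase (betaC g1 g2 g3) c x * u.toFun x * v.toFun x
      * conj (θ x)) (volume : Measure (Rn N)) :=
    integrable_theta_pair' hθs.continuous hθc _ c hu.2.1 hv.2.1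
  have hq : ∀ t : ℝ, Qt g1 g2 g3 om c u v (pert w t (tw θ))
      = Qt g1 g2 g3 om c u v w
        + ((∫ x, ∑ i, w.grad x i * conj ((tw θ).grad x i)).re
            + (2 * g3 * om - g3 ^ 2 * ‖c‖ ^ 2 / 4) * (∫ x, w.toFun x * conj (θ x)).re) * t
        + ((1/2) * kin (tw θ)
            + (1/2) * (2 * g3 * om - g3 ^ 2 * ‖c‖ ^ 2 / 4) * msq (tw θ)) * t ^ 2
      := by
    intro t
    have e1 := kin_expand (u := w) (θ := tw θ) hw.2.2 hΘ1.2.2 t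
    have e2 := msq_expand (u := w) (θ := tw θ) hw.2.1 hΘ1.2.1 t
    rw [tw_toFun] at e2
    unfold Qt Kfun
    rw [e1, e2]
    ring
  have hV : ∀ t : ℝ, Vt g1 g2 g3 c u v (pert w t (tw θ))
      = Vt g1 g2 g3 c u v w + (Vraw (betaC g1 g2 g3) c u.toFun v.toFun θ) * t :=
    fun t => Vraw_expand_right hInt hθint' t
  simp only [← tw_grad]
  set a3 : ℝ := 2 * g3 * om - g3 ^ 2 * ‖c‖ ^ 2 / 4 with ha3
  set q0 : ℝ := Qt g1 g2 g3 om c u v w with hq0d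
  set v0 : ℝ := Vt g1 g2 g3 c u v w with hv0d
  set q1 : ℝ := (∫ x, ∑ i, w.grad x i * conj ((tw θ).grad x i)).re
    + a3 * (∫ x, w.toFun x * conj (θ x)).re with hq1d
  set q2 : ℝ := (1/2) * kin (tw θ) + (1/2) * a3 * msq (tw θ) with hq2d
  set v1 : ℝ := Vraw (betaC g1 g2 g3) c u.toFun v.toFun θ with hv1d
  clear_value q0 v0 q1 q2 v1
  have h23 : 2 * q0 = 3 * v0 := by
    unfold Nt at hNz; rw [← hq0d, ← hv0d] at hNz; linarith
  have hmuv : muTilde g1 g2 g3 om c = q0 - v0 := by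
    rw [← hmin]; unfold St; rw [← hq0d, ← hv0d]
  have hge : ∀ t : ℝ, 0 < q0 + q1 * t + q2 * t ^ 2 → 0 < v0 + v1 * t →
      27 * (q0 - v0) * (v0 + v1 * t) ^ 2 ≤ 4 * (q0 + q1 * t + q2 * t ^ 2) ^ 3 := by
    intro t h1 h2
    have hQt : 0 < Qt g1 g2 g3 om c u v (pert w t (tw θ)) := by
      rw [hq t]; linarith
    have hVt : 0 < Vt g1 g2 g3 c u v (pert w t (tw θ)) := by
      rw [hV t]; linarith
    have hnt' : ¬ Triv u v (pert w t (tw θ)) := fun h => hunz h.1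
    have hf := mu_le_fiber hc1.le hc2.le hc3.le hu hv (inH1_pert hw hΘ1 t) hnt' hQt hVt
    rw [hq t, hV t, hmuv] at hf
    have hpos : (0:ℝ) < 27 * (v0 + v1 * t) ^ 2 := by positivity
    have h4 := (le_div_iff₀ hpos).mp hf
    calc 27 * (q0 - v0) * (v0 + v1 * t) ^ 2
        = (q0 - v0) * (27 * (v0 + v1 * t) ^ 2) := by ring
      _ ≤ 4 * (q0 + q1 * t + q2 * t ^ 2) ^ 3 := h4
  have hfin := key_poly q0 q1 q2 v0 v1 hQpos h23 hge
  rw [hq1d, hv1d] at hfin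
  linarith [hfin]


/-! ### Behaviour under `θ ↦ i θ` -/

lemma fderiv_Imul {θ : Rn N → ℂ} (hθs : ContDiff ℝ (⊤ : ℕ∞) θ) (x : Rn N) :
    fderiv ℝ (fun y => Complex.I * θ y) x = Complex.I • fderiv ℝ θ x :=
  fderiv_const_mul (hθs.differentiable (by simp) x) _

lemma int_grad_Imul (X : WFun N) {θ : Rn N → ℂ} (hθs : ContDiff ℝ (⊤ : ℕ∞) θ) :
    (∫ x, ∑ i, X.grad x i
        * conj (fderiv ℝ (fun y => Complex.I * θ y) x (EuclideanSpace.single i (1 : ℝ))))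
      = -Complex.I * ∫ x, ∑ i, X.grad x i
        * conj (fderiv ℝ θ x (EuclideanSpace.single i (1 : ℝ))) := by
  rw [show (fun x => ∑ i, X.grad x i
        * conj (fderiv ℝ (fun y => Complex.I * θ y) x (EuclideanSpace.single i (1 : ℝ))))
      = fun x => -Complex.I * ∑ i, X.grad x i
        * conj (fderiv ℝ θ x (EuclideanSpace.single i (1 : ℝ))) by
    funext x
    rw [Finset.mul_sum]
    refine Finset.sum_congr rfl fun i _ => ?_
    rw [fderiv_Imul hθs x, ContinuousLinearMap.smul_apply, smul_eq_mul, map_mul,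
      Complex.conj_I]
    ring]
  rw [integral_const_mul]

lemma int_pair_Imul (X : WFun N) (θ : Rn N → ℂ) :
    (∫ x, X.toFun x * conj (Complex.I * θ x))
      = -Complex.I * ∫ x, X.toFun x * conj (θ x) := by
  rw [show (fun x => X.toFun x * conj (Complex.I * θ x))
      = fun x => -Complex.I * (X.toFun x * conj (θ x)) by
    funext x; rw [map_mul, Complex.conj_I]; ring]
  rw [integral_const_mul]

lemma intV_Imul_left (b : ℝ) (c : Rn N) (f g θ : Rn N → ℂ) :
    (∫ x, phase b c x * (Complex.I * θ x) * f x * conj (g x))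
      = Complex.I * ∫ x, phase b c x * θ x * f x * conj (g x) := by
  rw [show (fun x => phase b c x * (Complex.I * θ x) * f x * conj (g x))
      = fun x => Complex.I * (phase b c x * θ x * f x * conj (g x)) by funext x; ring]
  rw [integral_const_mul]

lemma intV_Imul_mid (b : ℝ) (c : Rn N) (f g θ : Rn N → ℂ) :
    (∫ x, phase b c x * f x * (Complex.I * θ x) * conj (g x))
      = Complex.I * ∫ x, phase b c x * f x * θ x * conj (g x) := by
  rw [show (fun x => phase b c x * f x * (Complex.I * θ x) * conj (g x))
      = fun x => Complex.I * (phase b c x * f x * θ x * conj (g x)) by funext x; ring]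
  rw [integral_const_mul]

lemma intV_Imul_right (b : ℝ) (c : Rn N) (f g θ : Rn N → ℂ) :
    (∫ x, phase b c x * f x * g x * conj (Complex.I * θ x))
      = -Complex.I * ∫ x, phase b c x * f x * g x * conj (θ x) := by
  rw [show (fun x => phase b c x * f x * g x * conj (Complex.I * θ x))
      = fun x => -Complex.I * (phase b c x * f x * g x * conj (θ x)) by
    funext x; rw [map_mul, Complex.conj_I]; ring]
  rw [integral_const_mul]

lemma re_neg_I_mul (z : ℂ) : (-Complex.I * z).re = z.im := by simp

lemma re_I_mul (z : ℂ) : (Complex.I * z).re = -z.im := by simp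

end NehariAux







open NehariAux

/-- Nehari minimizers are weak solutions (Lemma 2.2, case (A)). -/
theorem minimizers_are_solutions_caseA
    (N : ℕ) (hN1 : 1 ≤ N) (hN5 : N ≤ 5)
    (g1 g2 g3 : ℝ) (hg1 : 0 < g1) (hg2 : 0 < g2) (hg3 : 0 < g3)
    (c : Rn N) (om : ℝ)
    (hom : max (max (g1 * ‖c‖ ^ 2 / 4) (g2 * ‖c‖ ^ 2 / 4)) (g3 * ‖c‖ ^ 2 / 8) < om)
    (u v w : WFun N) (hu : u.InH1) (hv : v.InH1) (hw : w.InH1)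
    (hnt : ¬ Triv u v w) (hNz : Nt g1 g2 g3 om c u v w = 0)
    (hmin : St g1 g2 g3 om c u v w = muTilde g1 g2 g3 om c) :
    SolvesSystem g1 g2 g3 om c u v w := by
  classical
  have hA : g1 * ‖c‖ ^ 2 / 4 < om :=
    lt_of_le_of_lt ((le_max_left _ _).trans (le_max_left _ _)) hom
  have hB : g2 * ‖c‖ ^ 2 / 4 < om :=
    lt_of_le_of_lt ((le_max_right _ _).trans (le_max_left _ _)) hom
  have hC : g3 * ‖c‖ ^ 2 / 8 < om := lt_of_le_of_lt (le_max_right _ _) hom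
  have hc1 : 0 < g1 * om - g1 ^ 2 * ‖c‖ ^ 2 / 4 := by
    nlinarith [mul_pos hg1 (sub_pos.mpr hA)]
  have hc2 : 0 < g2 * om - g2 ^ 2 * ‖c‖ ^ 2 / 4 := by
    nlinarith [mul_pos hg2 (sub_pos.mpr hB)]
  have hc3 : 0 < 2 * g3 * om - g3 ^ 2 * ‖c‖ ^ 2 / 4 := by
    nlinarith [mul_pos hg3 (sub_pos.mpr hC)]
  have hInt : Integrable (fun x => phase (betaC g1 g2 g3) c x * u.toFun x * v.toFun x
      * conj (w.toFun x)) (volume : Measure (Rn N)) := by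
    by_contra h
    have hV0 : Vt g1 g2 g3 c u v w = 0 := by
      unfold Vt Vraw
      rw [integral_undef h]
      simp
    have hQ0 : Qt g1 g2 g3 om c u v w = 0 := by
      unfold Nt at hNz; linarith
    exact hnt (triv_of_Qt_eq_zero hc1 hc2 hc3 hu.2.1 hv.2.1 hw.2.1 hQ0)
  have hQpos : 0 < Qt g1 g2 g3 om c u v w := by
    rcases lt_or_eq_of_le (Qt_nonneg hc1.le hc2.le hc3.le u v w) with h | h
    · exact h
    · exact absurd (triv_of_Qt_eq_zero hc1 hc2 hc3 hu.2.1 hv.2.1 hw.2.1 h.symm) hnt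
  have hVpos : 0 < Vt g1 g2 g3 c u v w := by unfold Nt at hNz; linarith
  have hVraw_pos : 0 < Vraw (betaC g1 g2 g3) c u.toFun v.toFun w.toFun := hVpos
  have hunz : ¬ u.IsZero := by
    intro h
    rw [Vraw_zero_left v.toFun w.toFun h] at hVraw_pos
    exact lt_irrefl _ hVraw_pos
  have hvnz : ¬ v.IsZero := by
    intro h
    rw [Vraw_zero_mid u.toFun w.toFun h] at hVraw_pos
    exact lt_irrefl _ hVraw_pos
  refine ⟨?_, ?_, ?_⟩
  · -- first equation
    intro θ hθs hθc
    have h_re := reid1 hc1 hc2 hc3 hu hv hw hInt hQpos hNz hmin hvnz hθs hθc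
    have hθs' : ContDiff ℝ (⊤ : ℕ∞) (fun x => Complex.I * θ x) := contDiff_const.mul hθs
    have hθc' : HasCompactSupport (fun x => Complex.I * θ x) := hθc.mul_left
    have h_im := reid1 hc1 hc2 hc3 hu hv hw hInt hQpos hNz hmin hvnz hθs' hθc'
    unfold Vraw at h_re h_im
    beta_reduce at h_im
    rw [int_grad_Imul u hθs, int_pair_Imul u θ, intV_Imul_left, re_neg_I_mul,
      re_neg_I_mul, re_I_mul] at h_im
    have hR : (∫ x, phase (-(betaC g1 g2 g3)) c x * w.toFun x * conj (v.toFun x)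
          * conj (θ x))
        = conj (∫ x, phase (betaC g1 g2 g3) c x * θ x * v.toFun x * conj (w.toFun x)) := by
      rw [← integral_conj]
      congr 1
      funext x
      rw [map_mul, map_mul, map_mul, conj_phase, Complex.conj_conj]
      ring
    beta_reduce
    rw [hR]
    apply Complex.ext
    · rw [Complex.add_re, Complex.re_ofReal_mul, Complex.conj_re]
      exact h_re
    · rw [Complex.add_im, Complex.im_ofReal_mul, Complex.conj_im]
      exact h_im
  · -- second equation
    intro θ hθs hθc
    have h_re := reid2 hc1 hc2 hc3 hu hv hw hInt hQpos hNz hmin hunz hθs hθc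
    have hθs' : ContDiff ℝ (⊤ : ℕ∞) (fun x => Complex.I * θ x) := contDiff_const.mul hθs
    have hθc' : HasCompactSupport (fun x => Complex.I * θ x) := hθc.mul_left
    have h_im := reid2 hc1 hc2 hc3 hu hv hw hInt hQpos hNz hmin hunz hθs' hθc'
    unfold Vraw at h_re h_im
    beta_reduce at h_im
    rw [int_grad_Imul v hθs, int_pair_Imul v θ, intV_Imul_mid, re_neg_I_mul,
      re_neg_I_mul, re_I_mul] at h_im
    have hR : (∫ x, phase (-(betaC g1 g2 g3)) c x * w.toFun x * conj (u.toFun x)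
          * conj (θ x))
        = conj (∫ x, phase (betaC g1 g2 g3) c x * u.toFun x * θ x * conj (w.toFun x)) := by
      rw [← integral_conj]
      congr 1
      funext x
      rw [map_mul, map_mul, map_mul, conj_phase, Complex.conj_conj]
      ring
    beta_reduce
    rw [hR]
    apply Complex.ext
    · rw [Complex.add_re, Complex.re_ofReal_mul, Complex.conj_re]
      exact h_re
    · rw [Complex.add_im, Complex.im_ofReal_mul, Complex.conj_im]
      exact h_im
  · -- third equation
    intro θ hθs hθc
    have h_re := reid3 hc1 hc2 hc3 hu hv hw hInt hQpos hNz hmin hunz hθs hθc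
    have hθs' : ContDiff ℝ (⊤ : ℕ∞) (fun x => Complex.I * θ x) := contDiff_const.mul hθs
    have hθc' : HasCompactSupport (fun x => Complex.I * θ x) := hθc.mul_left
    have h_im := reid3 hc1 hc2 hc3 hu hv hw hInt hQpos hNz hmin hunz hθs' hθc'
    unfold Vraw at h_re h_im
    beta_reduce at h_im
    rw [int_grad_Imul w hθs, int_pair_Imul w θ, intV_Imul_right, re_neg_I_mul,
      re_neg_I_mul, re_neg_I_mul] at h_im
    beta_reduce
    apply Complex.ext
    · rw [Complex.add_re, Complex.re_ofReal_mul]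
      exact h_re
    · rw [Complex.add_im, Complex.im_ofReal_mul]
      exact h_im
end
end

section
/- Scaling of the Nehari level (Lemma 4.3): Let N = 4, γ₁, γ₂, γ₃ > 0, ω > 0, and c ∈ ℝ⁴ with c ≠ 0. Then μ̃_{ω,c} = |c|² · μ̃_{ω/|c|², c/|c|}. -/
noncomputable section

open MeasureTheory Filter Complex ComplexConjugate

/-! ### Auxiliary lemmas for the scaling argument -/

section ScalingAux

lemma finrank4 : Module.finrank ℝ (Rn 4) = 4 := finrank_euclideanSpace_fin

lemma integral_comp_smul_pos {E : Type*} [NormedAddCommGroup E] [NormedSpace ℝ E]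
    (f : Rn 4 → E) {ρ : ℝ} (hρ : 0 < ρ) :
    (∫ x : Rn 4, f (ρ • x)) = (ρ ^ 4)⁻¹ • ∫ x : Rn 4, f x := by
  have := Measure.integral_comp_smul (volume : Measure (Rn 4)) f ρ
  rw [finrank4] at this
  rw [this, abs_of_pos (by positivity)]

def smEquiv (ρ : ℝ) (hρ : ρ ≠ 0) : Rn 4 ≃ᵐ Rn 4 :=
  (Homeomorph.smul (Units.mk0 ρ hρ)).toMeasurableEquiv

lemma smEquiv_eq (ρ : ℝ) (hρ : ρ ≠ 0) : (smEquiv ρ hρ : Rn 4 → Rn 4) = fun x => ρ • x := by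
  funext x; rfl

lemma map_smul_vol (ρ : ℝ) (hρ : ρ ≠ 0) :
    Measure.map (smEquiv ρ hρ) (volume : Measure (Rn 4))
      = ENNReal.ofReal |(ρ ^ 4)⁻¹| • volume := by
  rw [smEquiv_eq]
  simpa [finrank4] using Measure.map_addHaar_smul (volume : Measure (Rn 4)) hρ

lemma memLp_comp_smul {E : Type*} [NormedAddCommGroup E] {f : Rn 4 → E}
    (hf : MemLp f 2 (volume : Measure (Rn 4))) {ρ : ℝ} (hρ : ρ ≠ 0) :
    MemLp (fun x => f (ρ • x)) 2 (volume : Measure (Rn 4)) := by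
  have h1 : MemLp f 2 (Measure.map (smEquiv ρ hρ) volume) := by
    rw [map_smul_vol]
    exact hf.smul_measure ENNReal.ofReal_ne_top
  have := ((smEquiv ρ hρ).memLp_map_measure_iff).1 h1
  exact this

lemma ae_zero_of_comp_smul {f : Rn 4 → ℂ} {ρ : ℝ} (hρ : ρ ≠ 0)
    (h : (fun x => f (ρ • x)) =ᵐ[(volume : Measure (Rn 4))] 0) :
    f =ᵐ[(volume : Measure (Rn 4))] 0 := by
  have h2 : ∀ᵐ x ∂(volume : Measure (Rn 4)), f ((smEquiv ρ hρ) x) = 0 := by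
    rw [smEquiv_eq]
    filter_upwards [h] with x hx using hx
  have h3 := ((smEquiv ρ hρ).measurableEmbedding.ae_map_iff (p := fun y => f y = 0)).2 h2
  rw [map_smul_vol] at h3
  have h4 : ∀ᵐ x ∂(volume : Measure (Rn 4)), f x = 0 := by
    rw [ae_iff] at h3 ⊢
    rw [Measure.smul_apply, smul_eq_mul, mul_eq_zero] at h3
    exact h3.resolve_left (by positivity : ENNReal.ofReal |(ρ ^ 4)⁻¹| ≠ 0)
  filter_upwards [h4] with x hx using hx

lemma fderiv_comp_smul' {θ : Rn 4 → ℂ} (hθ : ContDiff ℝ (⊤ : ℕ∞) θ) (r : ℝ) (y : Rn 4) (i : Fin 4) :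
    fderiv ℝ (fun z => θ (r • z)) y (EuclideanSpace.single i (1 : ℝ))
      = r • fderiv ℝ θ (r • y) (EuclideanSpace.single i (1 : ℝ)) := by
  have hin : HasFDerivAt (fun z : Rn 4 => r • z)
      (r • ContinuousLinearMap.id ℝ (Rn 4)) y := (hasFDerivAt_id y).const_smul r
  have hout := (hθ.differentiable (by simp) (r • y)).hasFDerivAt
  have h2 : HasFDerivAt (fun z => θ (r • z))
      ((fderiv ℝ θ (r • y)).comp (r • ContinuousLinearMap.id ℝ (Rn 4))) y := hout.comp y hin
  rw [h2.fderiv]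
  simp

lemma isWeakGrad_scale {u : Rn 4 → ℂ} {du : Rn 4 → Cn 4}
    (h : IsWeakGrad u du) {ρ : ℝ} (hρ : 0 < ρ) :
    IsWeakGrad (fun x => (ρ : ℂ) ^ 2 * u (ρ • x))
      (fun x => (ρ ^ 3 : ℝ) • du (ρ • x)) := by
  intro θ hθ hθc i
  set φ : Rn 4 → ℂ := fun y => θ (ρ⁻¹ • y) with hφdef
  have hρ' : ρ ≠ 0 := hρ.ne'
  have hφ : ContDiff ℝ (⊤ : ℕ∞) φ := hθ.comp (contDiff_id.const_smul ρ⁻¹)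
  have hφc : HasCompactSupport φ := by
    have : φ = θ ∘ (Homeomorph.smul (Units.mk0 ρ⁻¹ (inv_ne_zero hρ'))) := by
      funext y; rfl
    rw [this]
    exact hθc.comp_homeomorph _
  have hkey : ∀ x : Rn 4, fderiv ℝ θ x (EuclideanSpace.single i (1 : ℝ))
      = ρ • fderiv ℝ φ (ρ • x) (EuclideanSpace.single i (1 : ℝ)) := by
    intro x
    have := fderiv_comp_smul' hθ ρ⁻¹ (ρ • x) i
    rw [hφdef]
    rw [this]
    simp [smul_smul, inv_mul_cancel₀ hρ', mul_inv_cancel₀ hρ']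
    rw [← mul_assoc]
    rw [mul_inv_cancel₀ (by exact_mod_cast hρ' : (ρ:ℂ) ≠ 0), one_mul]
  have hcv := h φ hφ hφc i
  have cv1 : (∫ x : Rn 4, u (ρ • x) * fderiv ℝ φ (ρ • x) (EuclideanSpace.single i (1 : ℝ)))
      = (ρ ^ 4)⁻¹ • ∫ y, u y * fderiv ℝ φ y (EuclideanSpace.single i (1 : ℝ)) :=
    integral_comp_smul_pos
      (fun y => u y * fderiv ℝ φ y (EuclideanSpace.single i (1 : ℝ))) hρ
  have cv2 : (∫ x : Rn 4, du (ρ • x) i * φ (ρ • x))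
      = (ρ ^ 4)⁻¹ • ∫ y, du y i * φ y :=
    integral_comp_smul_pos (fun y => du y i * φ y) hρ
  have hphiρ : ∀ x : Rn 4, φ (ρ • x) = θ x := by
    intro x
    rw [hφdef]
    simp [smul_smul, inv_mul_cancel₀ hρ']
  calc (∫ x : Rn 4, ((ρ:ℂ)^2 * u (ρ • x)) * fderiv ℝ θ x (EuclideanSpace.single i (1 : ℝ)))
      = ∫ x : Rn 4, ((ρ:ℂ)^3) • (u (ρ • x) * fderiv ℝ φ (ρ • x) (EuclideanSpace.single i (1 : ℝ))) := by
        congr 1; funext x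
        rw [hkey x]
        push_cast [Complex.real_smul, smul_eq_mul]
        ring
    _ = ((ρ:ℂ)^3) • ((ρ ^ 4)⁻¹ • ∫ y, u y * fderiv ℝ φ y (EuclideanSpace.single i (1 : ℝ))) := by
        rw [integral_smul, cv1]
    _ = ((ρ:ℂ)^3) • ((ρ ^ 4)⁻¹ • (- ∫ y, du y i * φ y)) := by rw [hcv]
    _ = - ∫ x : Rn 4, ((ρ^3 : ℝ) • du (ρ • x)) i * θ x := by
        have : (∫ x : Rn 4, ((ρ^3 : ℝ) • du (ρ • x)) i * θ x)
            = ((ρ:ℂ)^3) • ((ρ ^ 4)⁻¹ • ∫ y, du y i * φ y) := by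
          rw [← cv2, ← integral_smul]
          congr 1; funext x
          rw [hphiρ x]
          simp [Complex.real_smul, smul_eq_mul]
          ring
        rw [this, smul_neg, smul_neg]

/-- The scaled function `x ↦ ρ² u(ρx)` with gradient `x ↦ ρ³ ∇u(ρx)`. -/
def sclW (ρ : ℝ) (u : WFun 4) : WFun 4 where
  toFun := fun x => (ρ : ℂ) ^ 2 * u.toFun (ρ • x)
  grad := fun x => (ρ ^ 3 : ℝ) • u.grad (ρ • x)

lemma sclW_inH1 {u : WFun 4} (hu : u.InH1) {ρ : ℝ} (hρ : 0 < ρ) : (sclW ρ u).InH1 := by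
  refine ⟨isWeakGrad_scale hu.1 hρ, ?_, ?_⟩
  · exact (memLp_comp_smul hu.2.1 hρ.ne').const_mul _
  · exact (memLp_comp_smul hu.2.2 hρ.ne').const_smul (ρ ^ 3 : ℝ)

lemma sclW_isZero {u : WFun 4} {ρ : ℝ} (hρ : 0 < ρ) (h : (sclW ρ u).IsZero) : u.IsZero := by
  have h1 : (fun x => u.toFun (ρ • x)) =ᵐ[(volume : Measure (Rn 4))] 0 := by
    filter_upwards [h] with x hx
    have hx' : (ρ : ℂ) ^ 2 * u.toFun (ρ • x) = 0 := hx
    have hρ2 : (ρ : ℂ) ^ 2 ≠ 0 := by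
      exact pow_ne_zero _ (by exact_mod_cast hρ.ne')
    simpa [hρ2] using hx'
  exact ae_zero_of_comp_smul hρ.ne' h1

lemma kin_sclW (u : WFun 4) {ρ : ℝ} (hρ : 0 < ρ) : kin (sclW ρ u) = ρ ^ 2 * kin u := by
  have hpt : ∀ x : Rn 4, ‖(sclW ρ u).grad x‖ ^ 2 = ρ ^ 6 * ‖u.grad (ρ • x)‖ ^ 2 := by
    intro x
    show ‖(ρ ^ 3 : ℝ) • u.grad (ρ • x)‖ ^ 2 = _
    rw [norm_smul, Real.norm_eq_abs, abs_of_pos (by positivity)]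
    ring
  unfold kin
  simp_rw [hpt]
  rw [MeasureTheory.integral_const_mul,
    integral_comp_smul_pos (fun y => ‖u.grad y‖ ^ 2) hρ, smul_eq_mul]
  field_simp

lemma msq_sclW (u : WFun 4) {ρ : ℝ} (hρ : 0 < ρ) : msq (sclW ρ u) = msq u := by
  have hpt : ∀ x : Rn 4, ‖(sclW ρ u).toFun x‖ ^ 2 = ρ ^ 4 * ‖u.toFun (ρ • x)‖ ^ 2 := by
    intro x
    show ‖(ρ : ℂ) ^ 2 * u.toFun (ρ • x)‖ ^ 2 = _
    rw [norm_mul, norm_pow, Complex.norm_real, Real.norm_eq_abs, abs_of_pos hρ]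
    ring
  unfold msq
  simp_rw [hpt]
  rw [MeasureTheory.integral_const_mul,
    integral_comp_smul_pos (fun y => ‖u.toFun y‖ ^ 2) hρ, smul_eq_mul]
  field_simp

lemma phase_scale (b : ℝ) (c : Rn 4) (ρ : ℝ) (x : Rn 4) :
    phase b (ρ • c) x = phase b c (ρ • x) := by
  unfold phase
  rw [real_inner_smul_left, ← real_inner_smul_right]

lemma Vraw_sclW (b : ℝ) (c : Rn 4) (u v w : WFun 4) {ρ : ℝ} (hρ : 0 < ρ) :
    Vraw b (ρ • c) (sclW ρ u).toFun (sclW ρ v).toFun (sclW ρ w).toFun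
      = ρ ^ 2 * Vraw b c u.toFun v.toFun w.toFun := by
  have hρ' : ρ ≠ 0 := hρ.ne'
  unfold Vraw
  have hpt : ∀ x : Rn 4,
      phase b (ρ • c) x * (sclW ρ u).toFun x * (sclW ρ v).toFun x * conj ((sclW ρ w).toFun x)
      = (ρ : ℂ) ^ 6 * (phase b c (ρ • x) * u.toFun (ρ • x) * v.toFun (ρ • x)
          * conj (w.toFun (ρ • x))) := by
    intro x
    rw [phase_scale]
    show phase b c (ρ • x) * ((ρ:ℂ)^2 * u.toFun (ρ • x)) * ((ρ:ℂ)^2 * v.toFun (ρ • x))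
        * conj ((ρ:ℂ)^2 * w.toFun (ρ • x)) = _
    rw [map_mul, map_pow, Complex.conj_ofReal]
    ring
  simp_rw [hpt]
  rw [MeasureTheory.integral_const_mul,
    integral_comp_smul_pos (fun y => phase b c y * u.toFun y * v.toFun y * conj (w.toFun y)) hρ]
  have hcoef : (ρ : ℂ) ^ 6 * ((((ρ ^ 4)⁻¹ : ℝ)) : ℂ) = (((ρ ^ 2 : ℝ)) : ℂ) := by
    have hz : (ρ : ℂ) ≠ 0 := by exact_mod_cast hρ'
    push_cast
    field_simp
  rw [Complex.real_smul, ← mul_assoc, hcoef, Complex.re_ofReal_mul]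

lemma norm_smul_sq (c : Rn 4) {ρ : ℝ} (hρ : 0 < ρ) : ‖ρ • c‖ ^ 2 = ρ ^ 2 * ‖c‖ ^ 2 := by
  rw [norm_smul, Real.norm_eq_abs, abs_of_pos hρ]
  ring

lemma Qt_sclW (g1 g2 g3 om : ℝ) (c : Rn 4) (u v w : WFun 4) {ρ : ℝ} (hρ : 0 < ρ) :
    Qt g1 g2 g3 (ρ ^ 2 * om) (ρ • c) (sclW ρ u) (sclW ρ v) (sclW ρ w)
      = ρ ^ 2 * Qt g1 g2 g3 om c u v w := by
  unfold Qt Kfun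
  rw [kin_sclW u hρ, kin_sclW v hρ, kin_sclW w hρ, msq_sclW u hρ, msq_sclW v hρ,
    msq_sclW w hρ, norm_smul_sq c hρ]
  ring

lemma Vt_sclW (g1 g2 g3 : ℝ) (c : Rn 4) (u v w : WFun 4) {ρ : ℝ} (hρ : 0 < ρ) :
    Vt g1 g2 g3 (ρ • c) (sclW ρ u) (sclW ρ v) (sclW ρ w)
      = ρ ^ 2 * Vt g1 g2 g3 c u v w := by
  unfold Vt
  exact Vraw_sclW _ c u v w hρ

/-- The Nehari constraint set. -/
def SetS (g1 g2 g3 om : ℝ) (c : Rn 4) : Set ℝ :=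
  {s : ℝ | ∃ u v w : WFun 4, u.InH1 ∧ v.InH1 ∧ w.InH1 ∧ ¬ Triv u v w ∧
    Nt g1 g2 g3 om c u v w = 0 ∧ s = St g1 g2 g3 om c u v w}

lemma mem_SetS_scale {g1 g2 g3 om : ℝ} {c : Rn 4} {s : ℝ} {ρ : ℝ} (hρ : 0 < ρ)
    (hs : s ∈ SetS g1 g2 g3 om c) :
    ρ ^ 2 * s ∈ SetS g1 g2 g3 (ρ ^ 2 * om) (ρ • c) := by
  obtain ⟨u, v, w, hu, hv, hw, htriv, hN, hSval⟩ := hs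
  refine ⟨sclW ρ u, sclW ρ v, sclW ρ w, sclW_inH1 hu hρ, sclW_inH1 hv hρ,
    sclW_inH1 hw hρ, ?_, ?_, ?_⟩
  · intro ⟨h1, h2, h3⟩
    exact htriv ⟨sclW_isZero hρ h1, sclW_isZero hρ h2, sclW_isZero hρ h3⟩
  · unfold Nt
    rw [Qt_sclW g1 g2 g3 om c u v w hρ, Vt_sclW g1 g2 g3 c u v w hρ]
    have h0 : Nt g1 g2 g3 om c u v w = 0 := hN
    unfold Nt at h0
    linear_combination ρ ^ 2 * h0
  · unfold St
    rw [Qt_sclW g1 g2 g3 om c u v w hρ, Vt_sclW g1 g2 g3 c u v w hρ, hSval]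
    unfold St
    ring

open Pointwise in
lemma SetS_scale_eq (g1 g2 g3 om : ℝ) (c : Rn 4) {ρ : ℝ} (hρ : 0 < ρ) :
    SetS g1 g2 g3 (ρ ^ 2 * om) (ρ • c) = (ρ ^ 2) • SetS g1 g2 g3 om c := by
  ext t
  constructor
  · intro ht
    have h1 := mem_SetS_scale (inv_pos.2 hρ) ht
    have e1 : (ρ⁻¹) ^ 2 * (ρ ^ 2 * om) = om := by field_simp
    have e2 : ρ⁻¹ • ρ • c = c := by
      rw [smul_smul, inv_mul_cancel₀ hρ.ne', one_smul]
    rw [e1, e2] at h1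
    refine ⟨ρ⁻¹ ^ 2 * t, h1, ?_⟩
    simp only [smul_eq_mul]
    field_simp
  · rintro ⟨s, hs, rfl⟩
    exact mem_SetS_scale hρ hs

end ScalingAux

/-- Scaling of the Nehari level (Lemma 4.3) :
`μ̃_{ω,c} = |c|² μ̃_{ω/|c|², c/|c|}` in dimension 4. -/
theorem nehari_level_scaling
    (g1 g2 g3 : ℝ) (hg1 : 0 < g1) (hg2 : 0 < g2) (hg3 : 0 < g3)
    (om : ℝ) (hom : 0 < om) (c : Rn 4) (hc : c ≠ 0) :
    muTilde g1 g2 g3 om c = ‖c‖ ^ 2 * muTilde g1 g2 g3 (om / ‖c‖ ^ 2) (‖c‖⁻¹ • c) := by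
  
  have hρ : 0 < ‖c‖ := norm_pos_iff.2 hc
  have hρ' : (‖c‖ : ℝ) ≠ 0 := hρ.ne'
  have hmu1 : muTilde g1 g2 g3 om c = sInf (SetS g1 g2 g3 om c) := rfl
  have hmu2 : muTilde g1 g2 g3 (om / ‖c‖ ^ 2) (‖c‖⁻¹ • c)
      = sInf (SetS g1 g2 g3 (om / ‖c‖ ^ 2) (‖c‖⁻¹ • c)) := rfl
  have e1 : om = ‖c‖ ^ 2 * (om / ‖c‖ ^ 2) := by field_simp
  have e2 : c = ‖c‖ • (‖c‖⁻¹ • c) := by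
    rw [smul_smul, mul_inv_cancel₀ hρ', one_smul]
  have e3 : SetS g1 g2 g3 om c
      = SetS g1 g2 g3 (‖c‖ ^ 2 * (om / ‖c‖ ^ 2)) (‖c‖ • (‖c‖⁻¹ • c)) := by
    rw [← e1, ← e2]
  rw [hmu1, hmu2, e3, SetS_scale_eq g1 g2 g3 (om / ‖c‖ ^ 2) (‖c‖⁻¹ • c) hρ,
    Real.sInf_smul_of_nonneg (by positivity), smul_eq_mul]
end
end

section
/- Coercivity on the set of nonnegative Nehari functional (static part of Lemma 4.2): Let N ≥ 1, γ₁, γ₂, γ₃ > 0, c ∈ ℝ^N, and ω ≥ max{γ₁|c|²/4, γ₂|c|²/4, γ₃|c|²/8}. If (u,v,w) ∈ H¹(ℝ^N)³ satisfies N_{ω,c}(u,v,w) ≥ 0, then K(u,v,w) ≤ 12 S_{ω,c}(u,v,w) + (|c|²/2)(γ₁² ∫|u|² dx + γ₂² ∫|v|² dx + γ₃² ∫|w|² dx). -/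
noncomputable section

open MeasureTheory Filter Complex ComplexConjugate

lemma msq_nonneg {N : ℕ} (f : WFun N) : 0 ≤ msq f :=
  integral_nonneg fun x => by positivity

lemma norm_sq_eucl {N : ℕ} (x : Cn N) : ‖x‖ ^ 2 = ∑ i, ‖x i‖ ^ 2 := by
  rw [EuclideanSpace.norm_eq, Real.sq_sqrt]
  positivity

lemma norm_sq_euclR {N : ℕ} (x : Rn N) : ‖x‖ ^ 2 = ∑ i, (x i) ^ 2 := by
  rw [EuclideanSpace.norm_eq, Real.sq_sqrt]
  · exact Finset.sum_congr rfl fun i _ => by simp [Real.norm_eq_abs, sq_abs]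
  · positivity

lemma integrable_grad_mul_conj {N : ℕ} (f : WFun N) (hf : f.InH1) (i : Fin N) :
    Integrable (fun x => Complex.I * f.grad x i * conj (f.toFun x))
      (volume : Measure (Rn N)) := by
  obtain ⟨-, hL2, hgL2⟩ := hf
  have m1 : MemLp (fun x => f.grad x i) 2 (volume : Measure (Rn N)) := by
    refine MemLp.of_le hgL2
      ((EuclideanSpace.proj (𝕜 := ℂ) i).continuous.comp_aestronglyMeasurable hgL2.1) ?_
    refine Eventually.of_forall fun x => ?_
    have h1 : ‖f.grad x i‖ ^ 2 ≤ ‖f.grad x‖ ^ 2 := by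
      rw [norm_sq_eucl]
      exact Finset.single_le_sum (f := fun j => ‖f.grad x j‖ ^ 2)
        (fun j _ => by positivity) (Finset.mem_univ i)
    nlinarith [norm_nonneg (f.grad x i), norm_nonneg (f.grad x)]
  have m2 : MemLp (fun x => conj (f.toFun x)) 2 (volume : Measure (Rn N)) := by
    refine MemLp.of_le hL2 (RCLike.continuous_conj.comp_aestronglyMeasurable hL2.1) ?_
    exact Eventually.of_forall fun x => by simp
  have hsm : MemLp ((fun x => conj (f.toFun x)) • (fun x => f.grad x i)) 1
      (volume : Measure (Rn N)) := by
    haveI : ENNReal.HolderTriple 2 2 1 := ⟨by rw [inv_one, ENNReal.inv_two_add_inv_two]⟩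
    exact m1.smul m2
  have hint := memLp_one_iff_integrable.mp hsm
  have : Integrable (fun x => ((fun x => conj (f.toFun x)) •
      (fun x => f.grad x i)) x * Complex.I) (volume : Measure (Rn N)) :=
    hint.mul_const _
  refine this.congr (Eventually.of_forall fun x => ?_)
  simp only [Pi.smul_apply, Pi.mul_apply, smul_eq_mul]
  ring

lemma mom_bound {N : ℕ} (g : ℝ) (c : Rn N) (f : WFun N) (hf : f.InH1) :
    -(1/2) * kin f - g ^ 2 * ‖c‖ ^ 2 / 2 * msq f ≤
      g * ∑ i, c i * (∫ x, Complex.I * f.grad x i * conj (f.toFun x)).re := by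
  have hInt : ∀ i : Fin N, Integrable (fun x => Complex.I * f.grad x i * conj (f.toFun x))
      (volume : Measure (Rn N)) := integrable_grad_mul_conj f hf
  have Iq1 : Integrable (fun x => ‖f.grad x‖ ^ 2) (volume : Measure (Rn N)) :=
    (memLp_two_iff_integrable_sq_norm hf.2.2.1).mp hf.2.2
  have Iq2 : Integrable (fun x => ‖f.toFun x‖ ^ 2) (volume : Measure (Rn N)) :=
    (memLp_two_iff_integrable_sq_norm hf.2.1.1).mp hf.2.1
  -- rewrite RHS as a single integral
  have hIntRe : ∀ i : Fin N, Integrable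
      (fun x => (Complex.I * f.grad x i * conj (f.toFun x)).re) (volume : Measure (Rn N)) := by
    intro i
    exact ((hInt i).re).congr (Eventually.of_forall fun x => by
      simp [RCLike.re_to_complex])
  have hre : ∀ i : Fin N, (∫ x, Complex.I * f.grad x i * conj (f.toFun x)).re
      = ∫ x, (Complex.I * f.grad x i * conj (f.toFun x)).re := by
    intro i
    have h := integral_re (hInt i)
    simpa [RCLike.re_to_complex] using h.symm
  have hRHS : g * ∑ i, c i * (∫ x, Complex.I * f.grad x i * conj (f.toFun x)).re
      = ∫ x, ∑ i, g * c i * (Complex.I * f.grad x i * conj (f.toFun x)).re := by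
    rw [integral_finset_sum _ (fun i _ => ((hIntRe i).const_mul (g * c i)))]
    rw [Finset.mul_sum]
    refine Finset.sum_congr rfl fun i _ => ?_
    rw [hre i, ← integral_const_mul, ← integral_const_mul]
    exact integral_congr_ae (Eventually.of_forall fun x => by ring)
  have hLHS : -(1/2) * kin f - g ^ 2 * ‖c‖ ^ 2 / 2 * msq f
      = ∫ x, (-(1/2) * ‖f.grad x‖ ^ 2 - g ^ 2 * ‖c‖ ^ 2 / 2 * ‖f.toFun x‖ ^ 2) := by
    rw [kin, msq, ← integral_const_mul, ← integral_const_mul,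
      ← integral_sub (Iq1.const_mul _) (Iq2.const_mul _)]
  rw [hRHS, hLHS]
  refine integral_mono ((Iq1.const_mul _).sub (Iq2.const_mul _))
    (integrable_finset_sum _ (fun i _ => ((hIntRe i).const_mul (g * c i)))) fun x => ?_
  have hsum : -(1/2) * ‖f.grad x‖ ^ 2 - g ^ 2 * ‖c‖ ^ 2 / 2 * ‖f.toFun x‖ ^ 2
      = ∑ i, (-(1/2) * ‖f.grad x i‖ ^ 2 - g ^ 2 * (c i) ^ 2 / 2 * ‖f.toFun x‖ ^ 2) := by
    simp only [norm_sq_eucl, norm_sq_euclR, Finset.mul_sum, Finset.sum_div,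
      Finset.sum_mul, Finset.sum_sub_distrib]
  rw [hsum]
  refine Finset.sum_le_sum fun i _ => ?_
  set z := f.grad x i
  set b := f.toFun x
  have habs : |(Complex.I * z * conj b).re| ≤ ‖z‖ * ‖b‖ := by
    calc |(Complex.I * z * conj b).re| ≤ ‖Complex.I * z * conj b‖ :=
          Complex.abs_re_le_norm _
      _ = ‖z‖ * ‖b‖ := by simp [norm_mul]
  obtain ⟨h1, h2⟩ := abs_le.mp habs
  rcases le_or_gt 0 (g * c i) with hgc | hgc
  · nlinarith [mul_le_mul_of_nonneg_left h1 hgc, sq_nonneg (‖z‖ - g * c i * ‖b‖)]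
  · nlinarith [mul_le_mul_of_nonpos_left h2 hgc.le, sq_nonneg (‖z‖ + g * c i * ‖b‖)]

/-- Coercivity on the set where the Nehari functional is nonnegative (static part of
Lemma 4.2formula) : if `N_{ω,c}(u,v,w) ≥ 0` then
`K ≤ 12 S_{ω,c} + (|c|²/2)(γ₁²‖u‖² + γ₂²‖v‖² + γ₃²‖w‖²)`. -/
theorem coercivity_nonneg_nehari
    (N : ℕ) (hN : 1 ≤ N)
    (g1 g2 g3 : ℝ) (hg1 : 0 < g1) (hg2 : 0 < g2) (hg3 : 0 < g3)
    (c : Rn N) (om : ℝ)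
    (hom : max (max (g1 * ‖c‖ ^ 2 / 4) (g2 * ‖c‖ ^ 2 / 4)) (g3 * ‖c‖ ^ 2 / 8) ≤ om)
    (u v w : WFun N) (hu : u.InH1) (hv : v.InH1) (hw : w.InH1)
    (hN0 : 0 ≤ Nf g1 g2 g3 om c u v w) :
    Kfun u v w ≤ 12 * Sf g1 g2 g3 om c u v w +
      ‖c‖ ^ 2 / 2 * (g1 ^ 2 * msq u + g2 ^ 2 * msq v + g3 ^ 2 * msq w) := by
  have hc2 : (0:ℝ) ≤ ‖c‖ ^ 2 := by positivity
  have hω1 : g1 * ‖c‖ ^ 2 / 4 ≤ om := le_trans (le_max_left _ _) (le_trans (le_max_left _ _) hom)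
  have hω2 : g2 * ‖c‖ ^ 2 / 4 ≤ om := le_trans (le_max_right _ _) (le_trans (le_max_left _ _) hom)
  have hω3 : g3 * ‖c‖ ^ 2 / 8 ≤ om := le_trans (le_max_right _ _) hom
  have hA : 0 ≤ (2 * om * g1 - g1 ^ 2 * ‖c‖ ^ 2 / 2) * msq u :=
    mul_nonneg (by nlinarith) (msq_nonneg u)
  have hB : 0 ≤ (2 * om * g2 - g2 ^ 2 * ‖c‖ ^ 2 / 2) * msq v :=
    mul_nonneg (by nlinarith) (msq_nonneg v)
  have hC : 0 ≤ (4 * om * g3 - g3 ^ 2 * ‖c‖ ^ 2 / 2) * msq w :=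
    mul_nonneg (by nlinarith) (msq_nonneg w)
  -- momentum bound
  have hcdEq : cdotP g1 g2 g3 c u v w
      = g1 * (∑ i, c i * (∫ x, Complex.I * u.grad x i * conj (u.toFun x)).re)
      + g2 * (∑ i, c i * (∫ x, Complex.I * v.grad x i * conj (v.toFun x)).re)
      + g3 * (∑ i, c i * (∫ x, Complex.I * w.grad x i * conj (w.toFun x)).re) := by
    simp only [cdotP, momComp, Finset.mul_sum, ← Finset.sum_add_distrib]
    exact Finset.sum_congr rfl fun i _ => by ring
  have hbu := mom_bound g1 c u hu
  have hbv := mom_bound g2 c v hv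
  have hbw := mom_bound g3 c w hw
  have hcd : -(1/2) * Kfun u v w
      - ‖c‖ ^ 2 / 2 * (g1 ^ 2 * msq u + g2 ^ 2 * msq v + g3 ^ 2 * msq w)
      ≤ cdotP g1 g2 g3 c u v w := by
    rw [hcdEq]
    simp only [Kfun]
    linarith
  have key : 12 * Sf g1 g2 g3 om c u v w
      = 4 * Qf g1 g2 g3 om c u v w + 4 * Nf g1 g2 g3 om c u v w := by
    simp only [Sf, Nf]; ring
  rw [key]
  simp only [Qf]
  linarith
end
end

section
/- Pohozaev identities (Lemma A.1): Let N ≥ 1, γ₁, γ₂, γ₃ > 0, ω ∈ ℝ. Suppose φ, ψ, χ : ℝ^N → ℝ are real-valued Schwartz functions satisfying −Δφ + γ₁ω φ = χ ψ, −Δψ + γ₂ω ψ = χ φ, −Δχ + 2γ₃ω χ = φ ψ pointwise on ℝ^N. Then, with K = ∫(|∇φ|² + |∇ψ|² + |∇χ|²) dx and M = γ₁∫φ² dx + γ₂∫ψ² dx + 2γ₃∫χ² dx, the following two identities hold: K + ω M = 3 ∫ φ ψ χ dx, and ((N−2)/2) K + (N/2) ω M = N ∫ φ ψ χ dx. -/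
noncomputable section

open MeasureTheory Filter Complex ComplexConjugate

set_option linter.unusedTactic false

namespace PohozaevAux

variable {N : ℕ}

abbrev ee (N : ℕ) (i : Fin N) : Rn N := EuclideanSpace.single i (1:ℝ)

noncomputable def pd (i : Fin N) (f : SchwartzMap (Rn N) ℝ) : SchwartzMap (Rn N) ℝ :=
  LineDeriv.lineDerivOp (ee N i) f

lemma pd_apply (i : Fin N) (f : SchwartzMap (Rn N) ℝ) (x : Rn N) :
    pd i f x = fderiv ℝ f x (ee N i) := rfl

lemma pd_coe (i : Fin N) (f : SchwartzMap (Rn N) ℝ) :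
    ⇑(pd i f) = fun x => fderiv ℝ f x (ee N i) := rfl

lemma exists_bound (f : SchwartzMap (Rn N) ℝ) : ∃ C, ∀ x, ‖f x‖ ≤ C := by
  refine ⟨SchwartzMap.seminorm ℝ 0 0 f, fun x => ?_⟩
  have h := SchwartzMap.le_seminorm ℝ 0 0 f x
  simpa using h

lemma coord_abs_le (x : Rn N) (j : Fin N) : |x j| ≤ ‖x‖ := by
  have h := abs_real_inner_le_norm (EuclideanSpace.single j (1:ℝ)) x
  simpa [EuclideanSpace.inner_single_left, EuclideanSpace.norm_single] using h

lemma int_mul (f g : SchwartzMap (Rn N) ℝ) :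
    Integrable (fun x => f x * g x) (volume : Measure (Rn N)) :=
  g.integrable.bdd_mul f.continuous.aestronglyMeasurable (ae_of_all _ (exists_bound f).choose_spec)

lemma int_mul3 (f g h : SchwartzMap (Rn N) ℝ) :
    Integrable (fun x => f x * g x * h x) (volume : Measure (Rn N)) := by
  have h2 := (int_mul g h).bdd_mul f.continuous.aestronglyMeasurable (ae_of_all _ (exists_bound f).choose_spec)
  exact h2.congr (Filter.Eventually.of_forall fun x => by ring)

lemma coord_continuous (j : Fin N) : Continuous (fun x : Rn N => x j) :=
  (EuclideanSpace.proj j : Rn N →L[ℝ] ℝ).continuous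

lemma int_xmul (j : Fin N) (f g : SchwartzMap (Rn N) ℝ) :
    Integrable (fun x => x j * (f x * g x)) (volume : Measure (Rn N)) := by
  obtain ⟨C, hC⟩ := exists_bound g
  have hC0 : 0 ≤ C := le_trans (norm_nonneg _) (hC 0)
  have h1 : Integrable (fun x : Rn N => ‖x‖ * ‖f x‖) (volume : Measure (Rn N)) := by
    simpa using f.integrable_pow_mul (volume : Measure (Rn N)) 1
  refine (h1.mul_const C).mono' ?_ ?_
  · exact ((coord_continuous j).mul (f.continuous.mul g.continuous)).aestronglyMeasurable
  · refine Filter.Eventually.of_forall fun x => ?_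
    have h2 : ‖x j * (f x * g x)‖ = |x j| * (‖f x‖ * ‖g x‖) := by
      simp [abs_mul, Real.norm_eq_abs]
    rw [h2]
    calc |x j| * (‖f x‖ * ‖g x‖) ≤ ‖x‖ * (‖f x‖ * C) := by
          refine mul_le_mul (coord_abs_le x j) ?_ (by positivity) (norm_nonneg x)
          exact mul_le_mul_of_nonneg_left (hC x) (norm_nonneg _)
      _ = ‖x‖ * ‖f x‖ * C := by ring

lemma int_xmul3 (j : Fin N) (f g h : SchwartzMap (Rn N) ℝ) :
    Integrable (fun x => x j * (f x * g x * h x)) (volume : Measure (Rn N)) := by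
  have h2 := (int_xmul j f g).bdd_mul h.continuous.aestronglyMeasurable (ae_of_all _ (exists_bound h).choose_spec)
  exact h2.congr (Filter.Eventually.of_forall fun x => by ring)

variable {N : ℕ}

lemma fderiv_mul_apply (f g : SchwartzMap (Rn N) ℝ) (x : Rn N) (v : Rn N) :
    fderiv ℝ (fun y => f y * g y) x v = fderiv ℝ f x v * g x + f x * fderiv ℝ g x v := by
  rw [fderiv_fun_mul f.differentiableAt g.differentiableAt]
  simp only [ContinuousLinearMap.add_apply, ContinuousLinearMap.coe_smul', Pi.smul_apply,
    smul_eq_mul]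
  ring

lemma fderiv_mul3_apply (f g h : SchwartzMap (Rn N) ℝ) (x : Rn N) (v : Rn N) :
    fderiv ℝ (fun y => f y * g y * h y) x v
      = fderiv ℝ f x v * g x * h x + f x * fderiv ℝ g x v * h x
        + f x * g x * fderiv ℝ h x v := by
  rw [fderiv_fun_mul (f.differentiableAt.fun_mul g.differentiableAt) h.differentiableAt]
  simp only [ContinuousLinearMap.add_apply, ContinuousLinearMap.coe_smul', Pi.smul_apply,
    smul_eq_mul]
  rw [fderiv_mul_apply]
  ring

lemma coord_differentiable (j : Fin N) : Differentiable ℝ (fun x : Rn N => x j) :=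
  (EuclideanSpace.proj j : Rn N →L[ℝ] ℝ).differentiable

lemma fderiv_coord (j : Fin N) (x : Rn N) (v : Rn N) :
    fderiv ℝ (fun x : Rn N => x j) x v = v j := by
  change fderiv ℝ (EuclideanSpace.proj j : Rn N →L[ℝ] ℝ) x v = v j
  rw [ContinuousLinearMap.fderiv]
  rfl

lemma fderiv_coord_mul (j : Fin N) (f : SchwartzMap (Rn N) ℝ) (x : Rn N) (v : Rn N) :
    fderiv ℝ (fun y : Rn N => y j * f y) x v = v j * f x + x j * fderiv ℝ f x v := by
  rw [fderiv_fun_mul (coord_differentiable j x) f.differentiableAt]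
  simp only [ContinuousLinearMap.add_apply, ContinuousLinearMap.coe_smul', Pi.smul_apply,
    smul_eq_mul]
  rw [fderiv_coord]
  ring

lemma ee_apply (i j : Fin N) : ee N i j = if j = i then (1:ℝ) else 0 :=
  EuclideanSpace.single_apply i 1 j

-- second derivative symmetry
lemma fderiv_differentiable (u : SchwartzMap (Rn N) ℝ) :
    Differentiable ℝ (fderiv ℝ (⇑u)) := by
  have h := (SchwartzMap.fderivCLM ℝ (Rn N) ℝ u).differentiable
  have he : ⇑(SchwartzMap.fderivCLM ℝ (Rn N) ℝ u) = fderiv ℝ (⇑u) := rfl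
  rwa [he] at h

lemma pd_pd_eq (u : SchwartzMap (Rn N) ℝ) (i j : Fin N) (x : Rn N) :
    pd i (pd j u) x = fderiv ℝ (fderiv ℝ (⇑u)) x (ee N i) (ee N j) := by
  have hcd : DifferentiableAt ℝ (fderiv ℝ (⇑u)) x := fderiv_differentiable u x
  have h := fderiv_clm_apply hcd (differentiableAt_const (ee N j))
  have h0 : pd i (pd j u) x = fderiv ℝ (fun y => fderiv ℝ (⇑u) y (ee N j)) x (ee N i) := rfl
  rw [h0, h]
  simp

lemma pd_comm (u : SchwartzMap (Rn N) ℝ) (i j : Fin N) (x : Rn N) :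
    pd i (pd j u) x = pd j (pd i u) x := by
  rw [pd_pd_eq, pd_pd_eq]
  exact second_derivative_symmetric (fun y => u.differentiableAt.hasFDerivAt)
    ((fderiv_differentiable u) x).hasFDerivAt (ee N i) (ee N j)


lemma lapR_eq (u : SchwartzMap (Rn N) ℝ) (x : Rn N) :
    lapR (⇑u) x = ∑ i, pd i (pd i u) x := rfl

lemma gradSq_eq (u : SchwartzMap (Rn N) ℝ) (x : Rn N) :
    gradSq (⇑u) x = ∑ i, pd i u x * pd i u x := by
  unfold gradSq
  refine Finset.sum_congr rfl fun i _ => ?_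
  rw [pd_apply, pow_two]

lemma ibp (f g : SchwartzMap (Rn N) ℝ) (i : Fin N) :
    ∫ x, f x * pd i g x = - ∫ x, pd i f x * g x := by
  exact integral_mul_fderiv_eq_neg_fderiv_mul_of_integrable
    (int_mul (pd i f) g) (int_mul f (pd i g)) (int_mul f g)
    (fun x _ => f.differentiableAt) (fun x _ => g.differentiableAt)


lemma ibp_coord (j : Fin N) {F : Rn N → ℝ}
    (hF : Differentiable ℝ F) (hFi : Integrable F (volume : Measure (Rn N)))
    (hxF : Integrable (fun x => x j * F x) (volume : Measure (Rn N)))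
    (hxF' : Integrable (fun x => x j * fderiv ℝ F x (ee N j)) (volume : Measure (Rn N))) :
    ∫ x, x j * fderiv ℝ F x (ee N j) = - ∫ x, F x := by
  have h1 : Integrable (fun x => fderiv ℝ (fun y : Rn N => y j) x (ee N j) * F x)
      (volume : Measure (Rn N)) := by
    refine hFi.congr (Filter.Eventually.of_forall fun x => ?_)
    beta_reduce
    rw [fderiv_coord, ee_apply]
    simp
  have h := integral_mul_fderiv_eq_neg_fderiv_mul_of_integrable h1 hxF' hxF
      (fun x _ => coord_differentiable j x) (fun x _ => hF x)
  rw [h]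
  congr 1
  refine integral_congr_ae (Filter.Eventually.of_forall fun x => ?_)
  beta_reduce
  rw [fderiv_coord, ee_apply]
  simp

lemma xgrad2 (f g : SchwartzMap (Rn N) ℝ) :
    ∑ j, ∫ x, x j * (pd j f x * g x + f x * pd j g x) = -(N:ℝ) * ∫ x, f x * g x := by
  have hj : ∀ j : Fin N, ∫ x, x j * (pd j f x * g x + f x * pd j g x)
      = - ∫ x, f x * g x := by
    intro j
    have hd : Differentiable ℝ (fun y : Rn N => f y * g y) :=
      f.differentiable.mul g.differentiable
    have hint : Integrable (fun x => x j * fderiv ℝ (fun y : Rn N => f y * g y) x (ee N j))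
        (volume : Measure (Rn N)) := by
      refine ((int_xmul j (pd j f) g).add (int_xmul j f (pd j g))).congr
        (Filter.Eventually.of_forall fun x => ?_)
      simp only [Pi.add_apply]
      beta_reduce
      rw [fderiv_mul_apply]
      simp only [pd_apply]
      ring
    have h := ibp_coord j hd (int_mul f g) (int_xmul j f g) hint
    calc ∫ x, x j * (pd j f x * g x + f x * pd j g x)
        = ∫ x, x j * fderiv ℝ (fun y : Rn N => f y * g y) x (ee N j) := by
          refine integral_congr_ae (Filter.Eventually.of_forall fun x => ?_)
          beta_reduce
          rw [fderiv_mul_apply]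
          simp only [pd_apply]
      _ = - ∫ x, f x * g x := h
  rw [Finset.sum_congr rfl fun j _ => hj j]
  simp only [Finset.sum_const, Finset.card_univ, Fintype.card_fin, nsmul_eq_mul]
  ring

lemma xgrad_sq (f : SchwartzMap (Rn N) ℝ) :
    ∑ j, ∫ x, x j * (f x * pd j f x) = -(N:ℝ)/2 * ∫ x, f x * f x := by
  have h2 : ∑ j : Fin N, (2:ℝ) * ∫ x, x j * (f x * pd j f x) = -(N:ℝ) * ∫ x, f x * f x := by
    rw [← xgrad2 f f]
    refine Finset.sum_congr rfl fun j _ => ?_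
    rw [← integral_const_mul]
    exact integral_congr_ae (Filter.Eventually.of_forall fun x => by ring)
  rw [← Finset.mul_sum] at h2
  linarith

lemma xgrad3 (f g h : SchwartzMap (Rn N) ℝ) :
    ∑ j, ∫ x, x j * (pd j f x * g x * h x + f x * pd j g x * h x + f x * g x * pd j h x)
      = -(N:ℝ) * ∫ x, f x * g x * h x := by
  have hj : ∀ j : Fin N,
      ∫ x, x j * (pd j f x * g x * h x + f x * pd j g x * h x + f x * g x * pd j h x)
        = - ∫ x, f x * g x * h x := by
    intro j
    have hd : Differentiable ℝ (fun y : Rn N => f y * g y * h y) :=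
      (f.differentiable.mul g.differentiable).mul h.differentiable
    have hint : Integrable (fun x => x j * fderiv ℝ (fun y : Rn N => f y * g y * h y) x (ee N j))
        (volume : Measure (Rn N)) := by
      refine (((int_xmul3 j (pd j f) g h).add (int_xmul3 j f (pd j g) h)).add
        (int_xmul3 j f g (pd j h))).congr (Filter.Eventually.of_forall fun x => ?_)
      simp only [Pi.add_apply]
      beta_reduce
      rw [fderiv_mul3_apply]
      simp only [pd_apply]
      ring
    have h0 := ibp_coord j hd (int_mul3 f g h) (int_xmul3 j f g h) hint
    calc ∫ x, x j * (pd j f x * g x * h x + f x * pd j g x * h x + f x * g x * pd j h x)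
        = ∫ x, x j * fderiv ℝ (fun y : Rn N => f y * g y * h y) x (ee N j) := by
          refine integral_congr_ae (Filter.Eventually.of_forall fun x => ?_)
          beta_reduce
          rw [fderiv_mul3_apply]
          simp only [pd_apply]
      _ = - ∫ x, f x * g x * h x := h0
  rw [Finset.sum_congr rfl fun j _ => hj j]
  simp only [Finset.sum_const, Finset.card_univ, Fintype.card_fin, nsmul_eq_mul]
  ring

lemma int_gradSq (u : SchwartzMap (Rn N) ℝ) :
    Integrable (fun x => gradSq (⇑u) x) (volume : Measure (Rn N)) := by
  have h : Integrable (fun x => ∑ i, pd i u x * pd i u x) (volume : Measure (Rn N)) :=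
    integrable_finset_sum _ (fun i _ => int_mul (pd i u) (pd i u))
  exact h.congr (Filter.Eventually.of_forall fun x => (gradSq_eq u x).symm)

lemma mul_lap (u : SchwartzMap (Rn N) ℝ) :
    ∫ x, u x * (∑ i, pd i (pd i u) x) = - ∫ x, gradSq (⇑u) x := by
  calc ∫ x, u x * (∑ i, pd i (pd i u) x)
      = ∫ x, ∑ i, u x * pd i (pd i u) x := by
        refine integral_congr_ae (Filter.Eventually.of_forall fun x => ?_)
        beta_reduce
        rw [Finset.mul_sum]
    _ = ∑ i, ∫ x, u x * pd i (pd i u) x :=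
        integral_finset_sum _ (fun i _ => int_mul u (pd i (pd i u)))
    _ = ∑ i, - ∫ x, pd i u x * pd i u x :=
        Finset.sum_congr rfl fun i _ => ibp u (pd i u) i
    _ = - ∑ i, ∫ x, pd i u x * pd i u x := by rw [← Finset.sum_neg_distrib]
    _ = - ∫ x, gradSq (⇑u) x := by
        congr 1
        rw [← integral_finset_sum _ (fun i _ => int_mul (pd i u) (pd i u))]
        exact integral_congr_ae (Filter.Eventually.of_forall fun x => (gradSq_eq u x).symm)

lemma nehari (u w1 w2 : SchwartzMap (Rn N) ℝ) (a : ℝ)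
    (heq : ∀ x, -(lapR (⇑u) x) + a * u x = w1 x * w2 x) :
    (∫ x, gradSq (⇑u) x) + a * ∫ x, u x * u x = ∫ x, w1 x * w2 x * u x := by
  have h1 : ∫ x, w1 x * w2 x * u x = ∫ x, (-(lapR (⇑u) x) + a * u x) * u x := by
    refine integral_congr_ae (Filter.Eventually.of_forall fun x => ?_)
    beta_reduce
    rw [← heq x]
  have hA : Integrable (fun x => u x * (∑ i, pd i (pd i u) x)) (volume : Measure (Rn N)) := by
    have h : Integrable (fun x => ∑ i, u x * pd i (pd i u) x) (volume : Measure (Rn N)) :=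
      integrable_finset_sum _ (fun i _ => int_mul u (pd i (pd i u)))
    exact h.congr (Filter.Eventually.of_forall fun x => (Finset.mul_sum _ _ _).symm)
  have hB : Integrable (fun x => a * (u x * u x)) (volume : Measure (Rn N)) :=
    (int_mul u u).const_mul a
  have hsplit : ∫ x, (-(lapR (⇑u) x) + a * u x) * u x
      = (- ∫ x, u x * (∑ i, pd i (pd i u) x)) + a * ∫ x, u x * u x := by
    calc ∫ x, (-(lapR (⇑u) x) + a * u x) * u x
        = ∫ x, (-(u x * (∑ i, pd i (pd i u) x)) + a * (u x * u x)) := by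
          refine integral_congr_ae (Filter.Eventually.of_forall fun x => ?_)
          beta_reduce
          rw [show lapR (⇑u) x = ∑ i, pd i (pd i u) x from rfl]
          ring
      _ = (∫ x, -(u x * (∑ i, pd i (pd i u) x))) + ∫ x, a * (u x * u x) :=
          integral_add hA.neg hB
      _ = (- ∫ x, u x * (∑ i, pd i (pd i u) x)) + a * ∫ x, u x * u x := by
          rw [integral_neg, integral_const_mul]
  rw [h1, hsplit, mul_lap u]
  ring

lemma poho_kin (u : SchwartzMap (Rn N) ℝ) :
    ∑ j, ∫ x, (x j * pd j u x) * (∑ i, pd i (pd i u) x)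
      = (((N:ℝ) - 2)/2) * ∫ x, gradSq (⇑u) x := by
  have hswap : ∑ j, ∫ x, (x j * pd j u x) * (∑ i, pd i (pd i u) x)
      = ∑ i, ∑ j, ∫ x, (x j * pd j u x) * pd i (pd i u) x := by
    rw [Finset.sum_comm]
    refine Finset.sum_congr rfl fun j _ => ?_
    calc ∫ x, (x j * pd j u x) * (∑ i, pd i (pd i u) x)
        = ∫ x, ∑ i, (x j * pd j u x) * pd i (pd i u) x := by
          refine integral_congr_ae (Filter.Eventually.of_forall fun x => ?_)
          beta_reduce
          rw [Finset.mul_sum]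
      _ = ∑ i, ∫ x, (x j * pd j u x) * pd i (pd i u) x :=
          integral_finset_sum _ (fun i _ => (int_xmul j (pd j u) (pd i (pd i u))).congr
            (Filter.Eventually.of_forall fun x => by ring))
  rw [hswap]
  have hrow : ∀ i : Fin N, ∑ j, ∫ x, (x j * pd j u x) * pd i (pd i u) x
      = ((N:ℝ)/2 - 1) * ∫ x, pd i u x * pd i u x := by
    intro i
    have key : ∀ j : Fin N, ∫ x, (x j * pd j u x) * pd i (pd i u) x
        = - (ee N i j * (∫ x, pd j u x * pd i u x)
            + ∫ x, x j * (pd i (pd j u) x * pd i u x)) := by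
      intro j
      have hf : Differentiable ℝ (fun y : Rn N => y j * pd j u y) :=
        (coord_differentiable j).mul (pd j u).differentiable
      have h1 : Integrable (fun x => fderiv ℝ (fun y : Rn N => y j * pd j u y) x (ee N i)
          * pd i u x) (volume : Measure (Rn N)) := by
        refine (((int_mul (pd j u) (pd i u)).const_mul (ee N i j)).add
          (int_xmul j (pd i (pd j u)) (pd i u))).congr
          (Filter.Eventually.of_forall fun x => ?_)
        simp only [Pi.add_apply]
        beta_reduce
        rw [fderiv_coord_mul, ← pd_apply]
        ring
      have h2 : Integrable (fun x => (x j * pd j u x) * fderiv ℝ (⇑(pd i u)) x (ee N i))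
          (volume : Measure (Rn N)) := by
        refine (int_xmul j (pd j u) (pd i (pd i u))).congr
          (Filter.Eventually.of_forall fun x => ?_)
        beta_reduce
        rw [← pd_apply]
        ring
      have h3 : Integrable (fun x => (x j * pd j u x) * pd i u x)
          (volume : Measure (Rn N)) :=
        (int_xmul j (pd j u) (pd i u)).congr (Filter.Eventually.of_forall fun x => by ring)
      have base := integral_mul_fderiv_eq_neg_fderiv_mul_of_integrable h1 h2 h3 (fun x _ => hf x)
        (fun x _ => (pd i u).differentiable x)
      calc ∫ x, (x j * pd j u x) * pd i (pd i u) x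
          = - ∫ x, fderiv ℝ (fun y : Rn N => y j * pd j u y) x (ee N i) * pd i u x := base
        _ = - ∫ x, (ee N i j * (pd j u x * pd i u x) + x j * (pd i (pd j u) x * pd i u x)) := by
            congr 1
            refine integral_congr_ae (Filter.Eventually.of_forall fun x => ?_)
            beta_reduce
            rw [fderiv_coord_mul, ← pd_apply]
            ring
        _ = - (ee N i j * (∫ x, pd j u x * pd i u x)
              + ∫ x, x j * (pd i (pd j u) x * pd i u x)) := by
            congr 1
            rw [integral_add ((int_mul (pd j u) (pd i u)).const_mul _)
              (int_xmul j (pd i (pd j u)) (pd i u)), integral_const_mul]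
    rw [Finset.sum_congr rfl fun j _ => key j, Finset.sum_neg_distrib, Finset.sum_add_distrib]
    have hfirst : ∑ j : Fin N, ee N i j * (∫ x, pd j u x * pd i u x)
        = ∫ x, pd i u x * pd i u x := by
      simp only [ee_apply, ite_mul, one_mul, zero_mul]
      rw [Finset.sum_ite_eq']
      simp
    have hsecond : ∑ j : Fin N, ∫ x, x j * (pd i (pd j u) x * pd i u x)
        = -(N:ℝ)/2 * ∫ x, pd i u x * pd i u x := by
      have hc : ∀ j : Fin N, ∫ x, x j * (pd i (pd j u) x * pd i u x)
          = ∫ x, x j * (pd i u x * pd j (pd i u) x) := by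
        intro j
        refine integral_congr_ae (Filter.Eventually.of_forall fun x => ?_)
        beta_reduce
        rw [pd_comm u i j x]
        ring
      rw [Finset.sum_congr rfl fun j _ => hc j]
      exact xgrad_sq (pd i u)
    rw [hfirst, hsecond]
    ring
  rw [Finset.sum_congr rfl fun i _ => hrow i, ← Finset.mul_sum,
    ← integral_finset_sum _ (fun i _ => int_mul (pd i u) (pd i u))]
  have hg : ∫ x, ∑ i, pd i u x * pd i u x = ∫ x, gradSq (⇑u) x :=
    integral_congr_ae (Filter.Eventually.of_forall fun x => (gradSq_eq u x).symm)
  rw [hg]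
  ring

lemma poho (u w1 w2 : SchwartzMap (Rn N) ℝ) (a : ℝ)
    (heq : ∀ x, -(lapR (⇑u) x) + a * u x = w1 x * w2 x) :
    ∑ j, ∫ x, w1 x * w2 x * (x j * pd j u x)
      = (-(((N:ℝ) - 2)/2)) * (∫ x, gradSq (⇑u) x) - a * ((N:ℝ)/2) * ∫ x, u x * u x := by
  have hj : ∀ j : Fin N, ∫ x, w1 x * w2 x * (x j * pd j u x)
      = (- ∫ x, (x j * pd j u x) * (∑ i, pd i (pd i u) x))
        + a * ∫ x, x j * (u x * pd j u x) := by
    intro j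
    have hA : Integrable (fun x => (x j * pd j u x) * (∑ i, pd i (pd i u) x))
        (volume : Measure (Rn N)) := by
      have h : Integrable (fun x => ∑ i, (x j * pd j u x) * pd i (pd i u) x)
          (volume : Measure (Rn N)) :=
        integrable_finset_sum _ (fun i _ => (int_xmul j (pd j u) (pd i (pd i u))).congr
          (Filter.Eventually.of_forall fun x => by ring))
      exact h.congr (Filter.Eventually.of_forall fun x => by
        beta_reduce
        rw [Finset.mul_sum])
    have hB : Integrable (fun x => a * (x j * (u x * pd j u x)))
        (volume : Measure (Rn N)) := (int_xmul j u (pd j u)).const_mul a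
    calc ∫ x, w1 x * w2 x * (x j * pd j u x)
        = ∫ x, (-((x j * pd j u x) * (∑ i, pd i (pd i u) x))
            + a * (x j * (u x * pd j u x))) := by
          refine integral_congr_ae (Filter.Eventually.of_forall fun x => ?_)
          beta_reduce
          rw [← heq x, show lapR (⇑u) x = ∑ i, pd i (pd i u) x from rfl]
          ring
      _ = (∫ x, -((x j * pd j u x) * (∑ i, pd i (pd i u) x)))
            + ∫ x, a * (x j * (u x * pd j u x)) := integral_add hA.neg hB
      _ = (- ∫ x, (x j * pd j u x) * (∑ i, pd i (pd i u) x))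
            + a * ∫ x, x j * (u x * pd j u x) := by
          rw [integral_neg, integral_const_mul]
  rw [Finset.sum_congr rfl fun j _ => hj j, Finset.sum_add_distrib, Finset.sum_neg_distrib,
    ← Finset.mul_sum, poho_kin u, xgrad_sq u]
  ring

lemma rhs3 (f g h : SchwartzMap (Rn N) ℝ) :
    ((∑ j, ∫ x, h x * g x * (x j * pd j f x)) + (∑ j, ∫ x, h x * f x * (x j * pd j g x)))
      + (∑ j, ∫ x, f x * g x * (x j * pd j h x)) = -(N:ℝ) * ∫ x, f x * g x * h x := by
  rw [← xgrad3 f g h, ← Finset.sum_add_distrib, ← Finset.sum_add_distrib]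
  refine Finset.sum_congr rfl fun j _ => ?_
  have i1 : Integrable (fun x => h x * g x * (x j * pd j f x)) (volume : Measure (Rn N)) :=
    (int_xmul3 j (pd j f) g h).congr (Filter.Eventually.of_forall fun x => by ring)
  have i2 : Integrable (fun x => h x * f x * (x j * pd j g x)) (volume : Measure (Rn N)) :=
    (int_xmul3 j f (pd j g) h).congr (Filter.Eventually.of_forall fun x => by ring)
  have i3 : Integrable (fun x => f x * g x * (x j * pd j h x)) (volume : Measure (Rn N)) :=
    (int_xmul3 j f g (pd j h)).congr (Filter.Eventually.of_forall fun x => by ring)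
  have hc : ∫ x, x j * (pd j f x * g x * h x + f x * pd j g x * h x + f x * g x * pd j h x)
      = ∫ x, (h x * g x * (x j * pd j f x) + h x * f x * (x j * pd j g x)
          + f x * g x * (x j * pd j h x)) := by
    refine integral_congr_ae (Filter.Eventually.of_forall fun x => ?_)
    beta_reduce
    ring
  rw [hc]
  exact ((integral_add (i1.add i2) i3).trans
    (congrArg (· + ∫ x, f x * g x * (x j * pd j h x)) (integral_add i1 i2))).symm

end PohozaevAux

open PohozaevAux

/-- Pohozaev identities (Lemma A.1) for real Schwartz solutions of the standing-wave
system. -/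
theorem pohozaev_identities
    (N : ℕ) (hN : 1 ≤ N)
    (g1 g2 g3 om : ℝ) (hg1 : 0 < g1) (hg2 : 0 < g2) (hg3 : 0 < g3)
    (φ ψ χ : SchwartzMap (Rn N) ℝ)
    (hφ : ∀ x, -(lapR (⇑φ) x) + g1 * om * φ x = χ x * ψ x)
    (hψ : ∀ x, -(lapR (⇑ψ) x) + g2 * om * ψ x = χ x * φ x)
    (hχ : ∀ x, -(lapR (⇑χ) x) + 2 * g3 * om * χ x = φ x * ψ x) :
    ((∫ x, gradSq (⇑φ) x + gradSq (⇑ψ) x + gradSq (⇑χ) x) +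
        om * ((g1 * ∫ x, (φ x) ^ 2) + (g2 * ∫ x, (ψ x) ^ 2) + 2 * g3 * ∫ x, (χ x) ^ 2)
        = 3 * ∫ x, φ x * ψ x * χ x) ∧
      (((N : ℝ) - 2) / 2 * (∫ x, gradSq (⇑φ) x + gradSq (⇑ψ) x + gradSq (⇑χ) x) +
        (N : ℝ) / 2 * (om * ((g1 * ∫ x, (φ x) ^ 2) + (g2 * ∫ x, (ψ x) ^ 2) +
          2 * g3 * ∫ x, (χ x) ^ 2))
        = (N : ℝ) * ∫ x, φ x * ψ x * χ x) := by
  have hsq : ∀ v : SchwartzMap (Rn N) ℝ, ∫ x, (v x) ^ 2 = ∫ x, v x * v x := fun v =>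
    integral_congr_ae (Filter.Eventually.of_forall fun x => by beta_reduce; rw [pow_two])
  have hK : ∫ x, gradSq (⇑φ) x + gradSq (⇑ψ) x + gradSq (⇑χ) x
      = ((∫ x, gradSq (⇑φ) x) + ∫ x, gradSq (⇑ψ) x) + ∫ x, gradSq (⇑χ) x :=
    (integral_add ((int_gradSq φ).add (int_gradSq ψ)) (int_gradSq χ)).trans
      (congrArg (· + ∫ x, gradSq (⇑χ) x) (integral_add (int_gradSq φ) (int_gradSq ψ)))
  have n1 := nehari φ χ ψ (g1 * om) hφ
  have n2 := nehari ψ χ φ (g2 * om) hψ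
  have n3 := nehari χ φ ψ (2 * g3 * om) hχ
  have p1 := poho φ χ ψ (g1 * om) hφ
  have p2 := poho ψ χ φ (g2 * om) hψ
  have p3 := poho χ φ ψ (2 * g3 * om) hχ
  have hR := rhs3 φ ψ χ
  have e1 : ∫ x, χ x * ψ x * φ x = ∫ x, φ x * ψ x * χ x :=
    integral_congr_ae (Filter.Eventually.of_forall fun x => by beta_reduce; ring)
  have e2 : ∫ x, χ x * φ x * ψ x = ∫ x, φ x * ψ x * χ x :=
    integral_congr_ae (Filter.Eventually.of_forall fun x => by beta_reduce; ring)
  rw [e1] at n1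
  rw [e2] at n2
  constructor
  · rw [hK, hsq φ, hsq ψ, hsq χ]
    linear_combination n1 + n2 + n3
  · rw [hK, hsq φ, hsq ψ, hsq χ]
    linear_combination p1 + p2 + p3 - hR
end
end
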